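/- arXiv:2511.12883 — 9 statements merged into one kernel-verified Lean document; each statement's English description precedes it below -/
import Mathlib

section
/- Let X be a δ-hyperbolic geodesic metric space, and let {U_λ : λ ∈ Λ} be a collection of k-quasiconvex subsets of X. Suppose V is a k-quasiconvex subset of X with d(V, U_λ) ≤ R for every λ ∈ Λ. Then the union V ∪ ⋃_{λ∈Λ} U_λ is (4δ + k + R)-quasiconvex in X. -/
open Metric Set
open scoped NNReal

/-- `γ` restricted to `[a,b]` is a unit-speed geodesic. -/
def IsGeodesicOn {X : Type*} [MetricSpace X] (γ : ℝ → X) (a b : ℝ) : Prop :=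
  ∀ s ∈ Set.Icc a b, ∀ t ∈ Set.Icc a b, dist (γ s) (γ t) = |s - t|

/-- `γ : [a,b] → X` is a geodesic from `x` to `y`. -/
def GeodesicFrom {X : Type*} [MetricSpace X] (γ : ℝ → X) (a b : ℝ) (x y : X) : Prop :=
  a ≤ b ∧ IsGeodesicOn γ a b ∧ γ a = x ∧ γ b = y

/-- `X` is a geodesic metric space. -/
def GeodesicSpace (X : Type*) [MetricSpace X] : Prop :=
  ∀ x y : X, ∃ γ : ℝ → X, GeodesicFrom γ 0 (dist x y) x y

/-- `A` is `k`-quasiconvex: every geodesic between points of `A` stays in the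
`k`-neighbourhood of `A`. -/
def QuasiconvexSet {X : Type*} [MetricSpace X] (k : ℝ) (A : Set X) : Prop :=
  ∀ x ∈ A, ∀ y ∈ A, ∀ γ : ℝ → X, ∀ a b : ℝ, GeodesicFrom γ a b x y →
    ∀ t ∈ Set.Icc a b, ∃ p ∈ A, dist (γ t) p ≤ k

/-- `X` is `δ`-hyperbolic in the sense of Rips: all geodesic triangles are `δ`-slim. -/
def SlimTriangles (X : Type*) [MetricSpace X] (δ : ℝ) : Prop :=
  ∀ (x y z : X) (γ₁ γ₂ γ₃ : ℝ → X) (a₁ b₁ a₂ b₂ a₃ b₃ : ℝ),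
    GeodesicFrom γ₁ a₁ b₁ x y → GeodesicFrom γ₂ a₂ b₂ y z → GeodesicFrom γ₃ a₃ b₃ x z →
    ∀ t ∈ Set.Icc a₃ b₃,
      (∃ s ∈ Set.Icc a₁ b₁, dist (γ₃ t) (γ₁ s) ≤ δ) ∨
      (∃ s ∈ Set.Icc a₂ b₂, dist (γ₃ t) (γ₂ s) ≤ δ)

/-- `γ : [a,b] → X` is a `lam`-quasigeodesic. -/
def QuasigeodesicOn {X : Type*} [MetricSpace X] (lam : ℝ) (γ : ℝ → X) (a b : ℝ) : Prop :=
  ∀ s ∈ Set.Icc a b, ∀ t ∈ Set.Icc a b,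
    |s - t| / lam - lam ≤ dist (γ s) (γ t) ∧ dist (γ s) (γ t) ≤ lam * |s - t| + lam

/-- `p` is a nearest point projection of `x` on `U`. -/
def NearestPointProj {X : Type*} [MetricSpace X] (U : Set X) (x p : X) : Prop :=
  p ∈ U ∧ ∀ q ∈ U, dist x p ≤ dist x q

/-- Hausdorff distance between `A` and `B` is at most `D`. -/
def HausLE {X : Type*} [MetricSpace X] (D : ℝ) (A B : Set X) : Prop :=
  (∀ a ∈ A, ∃ b ∈ B, dist a b ≤ D) ∧ (∀ b ∈ B, ∃ a ∈ A, dist a b ≤ D)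

/-- A function `ℝ → ℝ` is metrically proper (preimages of bounded sets of
nonnegative reals are bounded). -/
def ProperFun (ψ : ℝ → ℝ) : Prop :=
  ∀ M : ℝ, ∃ N : ℝ, ∀ r : ℝ, 0 ≤ r → ψ r ≤ M → r ≤ N

/-- A function `ℝ≥0 → ℝ≥0` is metrically proper. -/
def ProperNN (ψ : ℝ≥0 → ℝ≥0) : Prop :=
  ∀ M : ℝ≥0, ∃ N : ℝ≥0, ∀ r : ℝ≥0, ψ r ≤ M → r ≤ N


/-- Auxiliary: every point of every geodesic from `x` to `y` lies within `D` of `W`. -/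
def GAll {X : Type*} [MetricSpace X] (D : ℝ) (W : Set X) (x y : X) : Prop :=
  ∀ γ : ℝ → X, ∀ a b : ℝ, GeodesicFrom γ a b x y →
    ∀ t ∈ Set.Icc a b, ∃ p ∈ W, dist (γ t) p ≤ D

lemma GAll.mono {X : Type*} [MetricSpace X] {D D' : ℝ} {W : Set X} {x y : X}
    (h : GAll D W x y) (hD : D ≤ D') : GAll D' W x y := by
  intro γ a b hγ t ht
  obtain ⟨p, hp, hd⟩ := h γ a b hγ t ht
  exact ⟨p, hp, hd.trans hD⟩

lemma GAll.symm {X : Type*} [MetricSpace X] {D : ℝ} {W : Set X} {x y : X}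
    (h : GAll D W x y) : GAll D W y x := by
  intro γ a b hγ t ht
  obtain ⟨hab, hg, ha, hb⟩ := hγ
  have key : GeodesicFrom (fun s => γ (a + b - s)) a b x y := by
    refine ⟨hab, ?_, by simpa using hb, by simpa using ha⟩
    intro s hs u hu
    have hs' : a + b - s ∈ Set.Icc a b := ⟨by linarith [hs.2], by linarith [hs.1]⟩
    have hu' : a + b - u ∈ Set.Icc a b := ⟨by linarith [hu.2], by linarith [hu.1]⟩
    have h2 := hg _ hs' _ hu'
    have h3 : (a + b - s) - (a + b - u) = u - s := by ring
    simp only [h2, h3]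
    exact abs_sub_comm u s
  have ht' : a + b - t ∈ Set.Icc a b := ⟨by linarith [ht.2], by linarith [ht.1]⟩
  obtain ⟨p, hp, hd⟩ := h (fun s => γ (a + b - s)) a b key (a + b - t) ht'
  refine ⟨p, hp, ?_⟩
  have : a + b - (a + b - t) = t := by ring
  simpa [this] using hd

lemma GAll.short {X : Type*} [MetricSpace X] {R : ℝ} {W : Set X} {x y : X}
    (hxy : dist x y ≤ R) (hx : x ∈ W) : GAll R W x y := by
  intro γ a b hγ t ht
  obtain ⟨hab, hg, ha, hb⟩ := hγ
  refine ⟨x, hx, ?_⟩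
  have h1 : dist (γ t) (γ a) = |t - a| := hg t ht a ⟨le_refl a, hab⟩
  have h2 : dist (γ a) (γ b) = |a - b| := hg a ⟨le_refl a, hab⟩ b ⟨hab, le_refl b⟩
  have h3 : |t - a| = t - a := abs_of_nonneg (by linarith [ht.1])
  have h4 : |a - b| = b - a := by rw [abs_sub_comm]; exact abs_of_nonneg (by linarith)
  have h5 : dist x y = b - a := by rw [← ha, ← hb, h2, h4]
  rw [← ha, h1, h3]
  linarith [ht.2]

lemma GAll.step {X : Type*} [MetricSpace X] {δ D₁ D₂ : ℝ} {W : Set X} {x y z : X}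
    (hgeo : GeodesicSpace X) (hhyp : SlimTriangles X δ)
    (h₁ : GAll D₁ W x y) (h₂ : GAll D₂ W y z) : GAll (δ + max D₁ D₂) W x z := by
  intro γ a b hγ t ht
  obtain ⟨γ₁, hγ₁⟩ := hgeo x y
  obtain ⟨γ₂, hγ₂⟩ := hgeo y z
  rcases hhyp x y z γ₁ γ₂ γ 0 (dist x y) 0 (dist y z) a b hγ₁ hγ₂ hγ t ht with
    ⟨s, hs, hd⟩ | ⟨s, hs, hd⟩
  · obtain ⟨p, hp, hdp⟩ := h₁ γ₁ 0 (dist x y) hγ₁ s hs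
    exact ⟨p, hp, (dist_triangle (γ t) (γ₁ s) p).trans
      (by linarith [le_max_left D₁ D₂])⟩
  · obtain ⟨p, hp, hdp⟩ := h₂ γ₂ 0 (dist y z) hγ₂ s hs
    exact ⟨p, hp, (dist_triangle (γ t) (γ₂ s) p).trans
      (by linarith [le_max_right D₁ D₂])⟩


theorem stmt4 {X : Type*} [MetricSpace X] {Λ : Type*} (δ k R : ℝ)
    (hδ : 0 ≤ δ) (hk : 0 ≤ k) (hR : 0 ≤ R)
    (hgeo : GeodesicSpace X) (hhyp : SlimTriangles X δ)
    (U : Λ → Set X) (hU : ∀ l, QuasiconvexSet k (U l))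
    (V : Set X) (hV : QuasiconvexSet k V)
    (hclose : ∀ l, ∃ v ∈ V, ∃ u ∈ U l, dist v u ≤ R) :
    QuasiconvexSet (4 * δ + k + R) (V ∪ ⋃ l, U l) := by
  set W : Set X := V ∪ ⋃ l, U l with hW
  have hVW : V ⊆ W := Set.subset_union_left
  have hUW : ∀ l, U l ⊆ W := fun l =>
    (Set.subset_iUnion U l).trans Set.subset_union_right
  -- from quasiconvexity to GAll
  have hGV : ∀ x ∈ V, ∀ y ∈ V, GAll k W x y := by
    intro x hx y hy γ a b hγ t ht
    obtain ⟨p, hp, hd⟩ := hV x hx y hy γ a b hγ t ht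
    exact ⟨p, hVW hp, hd⟩
  have hGU : ∀ l, ∀ x ∈ U l, ∀ y ∈ U l, GAll k W x y := by
    intro l x hx y hy γ a b hγ t ht
    obtain ⟨p, hp, hd⟩ := hU l x hx y hy γ a b hγ t ht
    exact ⟨p, hUW l hp, hd⟩
  -- from a point of U l to the bridge point in V
  have hUtoV : ∀ l, ∀ x ∈ U l, ∃ v ∈ V, GAll (δ + k + R) W x v := by
    intro l x hx
    obtain ⟨v, hv, u, hu, hvu⟩ := hclose l
    refine ⟨v, hv, ?_⟩
    have g1 : GAll k W x u := hGU l x hx u hu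
    have g2 : GAll R W u v := GAll.short (by rwa [dist_comm]) (hUW l hu)
    have := GAll.step hgeo hhyp g1 g2
    exact this.mono (by rcases max_cases k R with ⟨h,_⟩|⟨h,_⟩ <;> simp [h] <;> linarith)
  -- from a point of V to a point of U l
  have hVtoU : ∀ l, ∀ x ∈ V, ∀ y ∈ U l, GAll (2 * δ + k + R) W x y := by
    intro l x hx y hy
    obtain ⟨v, hv, g⟩ := hUtoV l y hy
    have g1 : GAll k W x v := hGV x hx v hv
    have := GAll.step hgeo hhyp g1 g.symm
    exact this.mono (by
      rcases max_cases k (δ + k + R) with ⟨h,_⟩|⟨h,_⟩ <;> simp [h] <;> linarith)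
  -- between points of two U's
  have hUtoU : ∀ l m, ∀ x ∈ U l, ∀ y ∈ U m, GAll (3 * δ + k + R) W x y := by
    intro l m x hx y hy
    obtain ⟨v, hv, g⟩ := hUtoV l x hx
    have g2 : GAll (2 * δ + k + R) W v y := hVtoU m v hv y hy
    have := GAll.step hgeo hhyp g g2
    exact this.mono (by
      rcases max_cases (δ + k + R) (2 * δ + k + R) with ⟨h,_⟩|⟨h,_⟩ <;> simp [h] <;> linarith)
  -- main
  have main : ∀ x ∈ W, ∀ y ∈ W, GAll (4 * δ + k + R) W x y := by
    intro x hx y hy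
    rcases hx with hx | hx
    · rcases hy with hy | hy
      · exact (hGV x hx y hy).mono (by linarith)
      · obtain ⟨s, ⟨m, rfl⟩, hy⟩ := hy
        exact (hVtoU m x hx y hy).mono (by linarith)
    · obtain ⟨s, ⟨l, rfl⟩, hx⟩ := hx
      rcases hy with hy | hy
      · exact ((hVtoU l y hy x hx).symm).mono (by linarith)
      · obtain ⟨s, ⟨m, rfl⟩, hy⟩ := hy
        exact (hUtoU l m x hx y hy).mono (by linarith)
  intro x hx y hy γ a b hγ t ht
  exact main x hx y hy γ a b hγ t ht
end

section
/- Let X be a δ-hyperbolic geodesic metric space, {U_λ : λ ∈ Λ} a collection of k-quasiconvex subsets of X, and V a k-quasiconvex subset such that V ⊆ N_R(⋃_λ U_λ) and V ∩ U_λ ≠ ∅ for all λ ∈ Λ. Then ⋃_{λ∈Λ} U_λ is (R + k + 2δ)-quasiconvex in X. -/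
open Metric Set
open scoped NNReal

theorem stmt5 {X : Type*} [MetricSpace X] {Λ : Type*} (δ k R : ℝ)
    (hδ : 0 ≤ δ) (hk : 0 ≤ k) (hR : 0 ≤ R)
    (hgeo : GeodesicSpace X) (hhyp : SlimTriangles X δ)
    (U : Λ → Set X) (hU : ∀ l, QuasiconvexSet k (U l))
    (V : Set X) (hV : QuasiconvexSet k V)
    (hsub : ∀ v ∈ V, ∃ l, ∃ u ∈ U l, dist v u ≤ R)
    (hint : ∀ l, (V ∩ U l).Nonempty) :
    QuasiconvexSet (R + k + 2 * δ) (⋃ l, U l) := by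
  rintro x hx y hy γ a b hγ t ht
  simp only [mem_iUnion] at hx hy
  obtain ⟨l₁, hx₁⟩ := hx
  obtain ⟨l₂, hy₂⟩ := hy
  obtain ⟨v₁, hv₁V, hv₁U⟩ := hint l₁
  obtain ⟨v₂, hv₂V, hv₂U⟩ := hint l₂
  obtain ⟨γ₁, hγ₁⟩ := hgeo x v₁
  obtain ⟨γ₂, hγ₂⟩ := hgeo v₁ y
  rcases hhyp x v₁ y γ₁ γ₂ γ 0 _ 0 _ a b hγ₁ hγ₂ hγ t ht with ⟨s, hs, hds⟩ | ⟨s, hs, hds⟩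
  · obtain ⟨p, hpU, hdp⟩ := hU l₁ x hx₁ v₁ hv₁U γ₁ 0 _ hγ₁ s hs
    refine ⟨p, mem_iUnion.2 ⟨l₁, hpU⟩, ?_⟩
    have h1 := dist_triangle (γ t) (γ₁ s) p
    linarith
  · obtain ⟨γ₄, hγ₄⟩ := hgeo v₁ v₂
    obtain ⟨γ₅, hγ₅⟩ := hgeo v₂ y
    rcases hhyp v₁ v₂ y γ₄ γ₅ γ₂ 0 _ 0 _ 0 _ hγ₄ hγ₅ hγ₂ s hs with ⟨s', hs', hds'⟩ | ⟨s', hs', hds'⟩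
    · obtain ⟨v, hvV, hdv⟩ := hV v₁ hv₁V v₂ hv₂V γ₄ 0 _ hγ₄ s' hs'
      obtain ⟨l, u, huU, hdu⟩ := hsub v hvV
      refine ⟨u, mem_iUnion.2 ⟨l, huU⟩, ?_⟩
      have h1 := dist_triangle (γ t) (γ₂ s) u
      have h2 := dist_triangle (γ₂ s) (γ₄ s') u
      have h3 := dist_triangle (γ₄ s') v u
      linarith
    · obtain ⟨p, hpU, hdp⟩ := hU l₂ v₂ hv₂U y hy₂ γ₅ 0 _ hγ₅ s' hs'
      refine ⟨p, mem_iUnion.2 ⟨l₂, hpU⟩, ?_⟩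
      have h1 := dist_triangle (γ t) (γ₂ s) p
      have h2 := dist_triangle (γ₂ s) (γ₅ s') p
      linarith
end

section
/- Let X be a geodesic metric space, A ⊆ X a k-quasiconvex subset, and R ≥ k + 1. Then the R-neighbourhood N_R(A) is path connected, and with its induced path metric the inclusion N_R(A) → X is an L-qi embedding for some constant L depending only on k and R. -/
open Metric Set
open scoped NNReal

/-- 1-Lipschitz on an interval. -/
def Lip1 {X : Type*} [MetricSpace X] (f : ℝ → X) (a b : ℝ) : Prop :=
  ∀ s ∈ Set.Icc a b, ∀ t ∈ Set.Icc a b, dist (f s) (f t) ≤ |s - t|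

lemma lip1_glue {X : Type*} [MetricSpace X] {f g : ℝ → X} {a m b : ℝ}
    (ham : a ≤ m) (hmb : m ≤ b)
    (hf : Lip1 f a m) (hg : Lip1 g m b) (heq : f m = g m) :
    Lip1 (fun t => if t ≤ m then f t else g t) a b := by
  have key : ∀ s ∈ Set.Icc a b, ∀ t ∈ Set.Icc a b, s ≤ t →
      dist (if s ≤ m then f s else g s) (if t ≤ m then f t else g t) ≤ |s - t| := by
    intro s hs t ht hst
    rcases le_or_gt s m with hsm | hsm
    · rcases le_or_gt t m with htm | htm
      · simp only [if_pos hsm, if_pos htm]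
        exact hf s ⟨hs.1, hsm⟩ t ⟨ht.1, htm⟩
      · simp only [if_pos hsm, if_neg htm.not_ge]
        calc dist (f s) (g t) ≤ dist (f s) (f m) + dist (g m) (g t) := by
              rw [heq]; exact dist_triangle _ _ _
          _ ≤ |s - m| + |m - t| := add_le_add
              (hf s ⟨hs.1, hsm⟩ m ⟨ham, le_rfl⟩) (hg m ⟨le_rfl, hmb⟩ t ⟨htm.le, ht.2⟩)
          _ = (m - s) + (t - m) := by
              rw [abs_of_nonpos (by linarith), abs_of_nonpos (by linarith)]; ring
          _ = |s - t| := by rw [abs_of_nonpos (by linarith)]; ring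
    · have htm : ¬ t ≤ m := fun h => hsm.not_ge (hst.trans h)
      simp only [if_neg hsm.not_ge, if_neg htm]
      exact hg s ⟨hsm.le, hs.2⟩ t ⟨(hsm.trans_le hst).le, ht.2⟩
  intro s hs t ht
  rcases le_total s t with h | h
  · exact key s hs t ht h
  · rw [dist_comm, abs_sub_comm]; exact key t ht s hs h

theorem stmt6 (k R : ℝ) (hk : 0 ≤ k) (hR : k + 1 ≤ R) :
    ∃ L : ℝ, 1 ≤ L ∧
      ∀ (X : Type) [inst : MetricSpace X] (A : Set X),
        GeodesicSpace X → QuasiconvexSet k A →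
        ∀ y ∈ {x : X | ∃ a ∈ A, dist x a ≤ R}, ∀ y' ∈ {x : X | ∃ a ∈ A, dist x a ≤ R},
          ∃ γ : ℝ → X, ContinuousOn γ (Set.Icc 0 1) ∧ γ 0 = y ∧ γ 1 = y' ∧
            (∀ t ∈ Set.Icc (0:ℝ) 1, γ t ∈ {x : X | ∃ a ∈ A, dist x a ≤ R}) ∧
            eVariationOn γ (Set.Icc 0 1) ≤ ENNReal.ofReal (L * dist y y' + L) := by
  have hR1 : 1 ≤ R := by linarith
  refine ⟨4 * R + 1, by linarith, ?_⟩
  intro X inst A hgeo hqc y hy y' hy'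
  obtain ⟨a, ha, hya⟩ := hy
  obtain ⟨a', ha', hy'a'⟩ := hy'
  obtain ⟨γ1, h1⟩ := hgeo y a
  obtain ⟨γ2, h2⟩ := hgeo a a'
  obtain ⟨γ3, h3⟩ := hgeo a' y'
  set ℓ1 := dist y a with hd1
  set ℓ2 := dist a a' with hd2
  set ℓ3 := dist a' y' with hd3
  have hℓ1 : 0 ≤ ℓ1 := dist_nonneg
  have hℓ2 : 0 ≤ ℓ2 := dist_nonneg
  have hℓ3 : 0 ≤ ℓ3 := dist_nonneg
  set ℓ := ℓ1 + ℓ2 + ℓ3 with hdℓ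
  have hℓ : 0 ≤ ℓ := by positivity
  set f2 : ℝ → X := fun t => γ2 (t - ℓ1) with hf2
  set f3 : ℝ → X := fun t => γ3 (t - ℓ1 - ℓ2) with hf3
  have lip1 : Lip1 γ1 0 ℓ1 := fun s hs t ht => (h1.2.1 s hs t ht).le
  have lip2 : Lip1 f2 ℓ1 (ℓ1 + ℓ2) := by
    intro s hs t ht
    have := (h2.2.1 (s - ℓ1) ⟨by linarith [hs.1], by linarith [hs.2]⟩
      (t - ℓ1) ⟨by linarith [ht.1], by linarith [ht.2]⟩).le
    simpa using this
  have lip3 : Lip1 f3 (ℓ1 + ℓ2) ℓ := by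
    intro s hs t ht
    have h0 := (h3.2.1 (s - ℓ1 - ℓ2) ⟨by linarith [hs.1], by linarith [hs.2]⟩
      (t - ℓ1 - ℓ2) ⟨by linarith [ht.1], by linarith [ht.2]⟩).le
    have habs : |s - ℓ1 - ℓ2 - (t - ℓ1 - ℓ2)| = |s - t| := by ring_nf
    calc dist (f3 s) (f3 t) = dist (γ3 (s - ℓ1 - ℓ2)) (γ3 (t - ℓ1 - ℓ2)) := rfl
      _ ≤ |s - ℓ1 - ℓ2 - (t - ℓ1 - ℓ2)| := h0
      _ = |s - t| := habs
  have heq23 : f2 (ℓ1 + ℓ2) = f3 (ℓ1 + ℓ2) := by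
    show γ2 (ℓ1 + ℓ2 - ℓ1) = γ3 (ℓ1 + ℓ2 - ℓ1 - ℓ2)
    rw [show ℓ1 + ℓ2 - ℓ1 - ℓ2 = (0:ℝ) by ring, show ℓ1 + ℓ2 - ℓ1 = ℓ2 by ring,
      h2.2.2.2, h3.2.2.1]
  set g23 : ℝ → X := fun t => if t ≤ ℓ1 + ℓ2 then f2 t else f3 t with hg23
  have lip23 : Lip1 g23 ℓ1 ℓ :=
    lip1_glue (by linarith) (by linarith) lip2 lip3 heq23
  have heq12 : γ1 ℓ1 = g23 ℓ1 := by
    have hg : g23 ℓ1 = f2 ℓ1 := if_pos (by linarith)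
    rw [hg]; show γ1 ℓ1 = γ2 (ℓ1 - ℓ1)
    rw [sub_self, h1.2.2.2, h2.2.2.1]
  set G : ℝ → X := fun t => if t ≤ ℓ1 then γ1 t else g23 t with hG
  have lipG : Lip1 G 0 ℓ := lip1_glue hℓ1 (by linarith) lip1 lip23 heq12
  set δ : ℝ → X := fun t => G (ℓ * t) with hδdef
  have hmem : ∀ u ∈ Set.Icc 0 ℓ, ∃ p ∈ A, dist (G u) p ≤ R := by
    intro u hu
    rcases le_or_gt u ℓ1 with h | h
    · refine ⟨a, ha, ?_⟩
      have hGu : G u = γ1 u := if_pos h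
      rw [hGu, ← h1.2.2.2]
      rw [h1.2.1 u ⟨hu.1, h⟩ ℓ1 ⟨hℓ1, le_rfl⟩]
      rw [abs_of_nonpos (by linarith)]
      linarith [hu.1]
    · have hGu1 : G u = g23 u := if_neg h.not_ge
      rcases le_or_gt u (ℓ1 + ℓ2) with h' | h'
      · have hGu : G u = γ2 (u - ℓ1) := by rw [hGu1]; exact if_pos h'
        obtain ⟨p, hp, hdp⟩ := hqc a ha a' ha' γ2 0 ℓ2 h2 (u - ℓ1)
          ⟨by linarith, by linarith⟩
        exact ⟨p, hp, by rw [hGu]; linarith⟩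
      · have hGu : G u = γ3 (u - ℓ1 - ℓ2) := by rw [hGu1]; exact if_neg h'.not_ge
        refine ⟨a', ha', ?_⟩
        rw [hGu, ← h3.2.2.1]
        rw [h3.2.1 (u - ℓ1 - ℓ2) ⟨by linarith, by linarith [hu.2]⟩ 0 ⟨le_rfl, hℓ3⟩]
        rw [abs_of_nonneg (by linarith)]
        have hh : dist y' a' ≤ R := hy'a'
        rw [dist_comm] at hh
        linarith [hu.2]
  have hδ0 : δ 0 = y := by
    show G (ℓ * 0) = y
    rw [mul_zero]
    have hg : G 0 = γ1 0 := if_pos hℓ1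
    rw [hg, h1.2.2.1]
  have hδ1 : δ 1 = y' := by
    show G (ℓ * 1) = y'
    rw [mul_one]
    rcases le_or_gt ℓ ℓ1 with h | h
    · have h2z : ℓ2 = 0 := by linarith
      have h3z : ℓ3 = 0 := by linarith
      have hg : G ℓ = γ1 ℓ := if_pos h
      have hℓeq : ℓ = ℓ1 := by rw [hdℓ, h2z, h3z]; ring
      rw [hg, hℓeq, h1.2.2.2]
      have haa' : a = a' := by rw [← dist_eq_zero, ← hd2, h2z]
      have ha'y' : a' = y' := by rw [← dist_eq_zero, ← hd3, h3z]
      rw [haa', ha'y']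
    · have hGu1 : G ℓ = g23 ℓ := if_neg h.not_ge
      rcases le_or_gt ℓ (ℓ1 + ℓ2) with h' | h'
      · have h3z : ℓ3 = 0 := by linarith
        have hg : G ℓ = γ2 (ℓ - ℓ1) := by rw [hGu1]; exact if_pos h'
        have hℓeq : ℓ - ℓ1 = ℓ2 := by rw [hdℓ, h3z]; ring
        rw [hg, hℓeq, h2.2.2.2]
        rw [← dist_eq_zero, ← hd3, h3z]
      · have hg : G ℓ = γ3 (ℓ - ℓ1 - ℓ2) := by rw [hGu1]; exact if_neg h'.not_ge
        have hℓeq : ℓ - ℓ1 - ℓ2 = ℓ3 := by rw [hdℓ]; ring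
        rw [hg, hℓeq, h3.2.2.2]
  have hmul : ∀ t ∈ Set.Icc (0:ℝ) 1, ℓ * t ∈ Set.Icc 0 ℓ := by
    intro t ht
    constructor
    · have := ht.1; positivity
    · nlinarith [ht.1, ht.2]
  have hlip : LipschitzOnWith ℓ.toNNReal δ (Set.Icc 0 1) := by
    rw [lipschitzOnWith_iff_dist_le_mul]
    intro s hs t ht
    calc dist (δ s) (δ t) = dist (G (ℓ * s)) (G (ℓ * t)) := rfl
      _ ≤ |ℓ * s - ℓ * t| := lipG _ (hmul s hs) _ (hmul t ht)
      _ = ℓ * |s - t| := by rw [← mul_sub, abs_mul, abs_of_nonneg hℓ]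
      _ = ℓ.toNNReal * dist s t := by
          rw [Real.dist_eq, Real.coe_toNNReal ℓ hℓ]
  refine ⟨δ, hlip.continuousOn, hδ0, hδ1, ?_, ?_⟩
  · intro t ht
    exact hmem (ℓ * t) (hmul t ht)
  · have hvar : eVariationOn δ (Set.Icc 0 1) ≤
        ℓ.toNNReal * eVariationOn id (Set.Icc (0:ℝ) 1) := by
      have := hlip.comp_eVariationOn_le (Set.mapsTo_id (Set.Icc (0:ℝ) 1))
      simpa using this
    have hid : eVariationOn (id : ℝ → ℝ) (Set.Icc (0:ℝ) 1) ≤ ENNReal.ofReal 1 := by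
      have := MonotoneOn.eVariationOn_le (f := (id : ℝ → ℝ)) (s := Set.univ)
        (monotone_id.monotoneOn _) (a := 0) (b := 1) (mem_univ _) (mem_univ _)
      simpa using this
    have hbound : eVariationOn δ (Set.Icc 0 1) ≤ ENNReal.ofReal ℓ := by
      calc eVariationOn δ (Set.Icc 0 1)
          ≤ ℓ.toNNReal * eVariationOn id (Set.Icc (0:ℝ) 1) := hvar
        _ ≤ ℓ.toNNReal * ENNReal.ofReal 1 := by gcongr
        _ = ENNReal.ofReal ℓ := by rw [ENNReal.ofReal_one, mul_one]; rfl
    refine hbound.trans (ENNReal.ofReal_le_ofReal ?_)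
    have htri : ℓ2 ≤ ℓ1 + dist y y' + dist y' a' := by
      calc ℓ2 = dist a a' := hd2
        _ ≤ dist a y + dist y a' := dist_triangle _ _ _
        _ ≤ dist a y + (dist y y' + dist y' a') := by linarith [dist_triangle y y' a']
        _ = ℓ1 + dist y y' + dist y' a' := by rw [dist_comm a y]; ring
    have h3R : ℓ3 ≤ R := by rw [hd3, dist_comm]; exact hy'a'
    have hy'a'R : dist y' a' ≤ R := hy'a'
    have hd : 0 ≤ dist y y' := dist_nonneg
    nlinarith [hya]
end

section
/- Let X be a δ-hyperbolic geodesic metric space and U ⊆ X a subset. If there exists an r-coarsely Lipschitz retraction ρ : X → U, then U is K-quasiconvex in X for a constant K depending only on δ and r. -/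
open Metric Set
open scoped NNReal

/-!
Let `γ s₀` be a point of a geodesic `γ` between points of `U` at maximal distance `D` from `U`.
Near `γ (s₀ ± D)` pick points of `U`, join them by a geodesic and push its integer points into `U`
with `ρ`: together with `γ (s₀ ± D)` this gives a `(D + 2r + 1)`-path of `O(D)` steps, all at
distance `≥ D` from `γ s₀`. By hyperbolicity the geodesic segment `γ [s₀ - D, s₀ + D]` is
`(δ log₂ D + D / 2 + r)`-close to that path, so `D ≲ 2 δ log₂ D + 2r`, which bounds `D` in terms
of `δ` and `r`.
-/

def IsCoarsePath {X : Type*} [MetricSpace X] (g : ℝ) (c : ℕ → X) (m : ℕ) : Prop :=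
  ∀ i < m, dist (c i) (c (i + 1)) ≤ g

lemma Nat.sq_le_two_pow_add_two (n : ℕ) : n ^ 2 ≤ 2 ^ (n + 2) := by
  induction n with
  | zero => norm_num
  | succ n ih =>
    have hn : n < 2 ^ n := Nat.lt_two_pow_self
    have h2 : 2 ^ (n + 1 + 2) = 2 * 2 ^ (n + 2) := by ring
    have h4 : 2 ^ (n + 2) = 4 * 2 ^ n := by ring
    nlinarith

lemma Nat.clog_two_sq_le (k : ℕ) : Nat.clog 2 k ^ 2 ≤ 8 * k := by
  rcases Nat.lt_or_ge 1 k with hk | hk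
  · have hpow := Nat.pred_eq_sub_one ▸ Nat.pow_pred_clog_lt_self one_lt_two hk
    have hpos := Nat.clog_pos one_lt_two hk
    calc Nat.clog 2 k ^ 2 ≤ 2 ^ (Nat.clog 2 k + 2) := Nat.sq_le_two_pow_add_two _
      _ = 8 * 2 ^ (Nat.clog 2 k - 1) := by
        rw [show Nat.clog 2 k + 2 = (Nat.clog 2 k - 1) + 3 by omega, pow_add]; ring
      _ ≤ 8 * k := by omega
  · simp [Nat.clog_of_right_le_one hk]

section Geodesic

variable {X : Type*} [MetricSpace X] {γ : ℝ → X} {a b t : ℝ} {x y : X}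

lemma IsGeodesicOn.continuousOn (h : IsGeodesicOn γ a b) : ContinuousOn γ (Icc a b) :=
  (LipschitzOnWith.of_dist_le_mul (K := 1) fun s hs t ht => by
    simp [h s hs t ht, Real.dist_eq]).continuousOn

namespace GeodesicFrom

lemma dist_left (hγ : GeodesicFrom γ a b x y) (ht : t ∈ Icc a b) : dist (γ t) x = t - a := by
  obtain ⟨hab, hgeod, rfl, -⟩ := hγ
  rw [hgeod t ht a ⟨le_rfl, hab⟩, abs_of_nonneg (by linarith [ht.1])]

lemma dist_right (hγ : GeodesicFrom γ a b x y) (ht : t ∈ Icc a b) : dist (γ t) y = b - t := by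
  obtain ⟨hab, hgeod, -, rfl⟩ := hγ
  rw [hgeod t ht b ⟨hab, le_rfl⟩, abs_of_nonpos (by linarith [ht.2]), neg_sub]

lemma dist_add_dist (hγ : GeodesicFrom γ a b x y) (ht : t ∈ Icc a b) :
    dist (γ t) x + dist (γ t) y = dist x y := by
  have hxy := hγ.dist_right ⟨le_rfl, hγ.1⟩
  rw [hγ.2.2.1] at hxy
  rw [hγ.dist_left ht, hγ.dist_right ht, hxy]
  ring

lemma restrict (hγ : GeodesicFrom γ a b x y) {u v : ℝ} (hau : a ≤ u) (huv : u ≤ v)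
    (hvb : v ≤ b) : GeodesicFrom γ u v (γ u) (γ v) :=
  ⟨huv, fun s hs t ht => hγ.2.1 s ⟨hau.trans hs.1, hs.2.trans hvb⟩ t
    ⟨hau.trans ht.1, ht.2.trans hvb⟩, rfl, rfl⟩

end GeodesicFrom

end Geodesic

namespace IsCoarsePath

variable {X : Type*} [MetricSpace X] {g : ℝ} {c : ℕ → X} {m : ℕ}

lemma mono {g' : ℝ} (hc : IsCoarsePath g c m) (hg : g ≤ g') : IsCoarsePath g' c m :=
  fun i hi => (hc i hi).trans hg

lemma of_le {k : ℕ} (hc : IsCoarsePath g c m) (hk : k ≤ m) : IsCoarsePath g c k :=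
  fun i hi => hc i (hi.trans_le hk)

lemma shift (hc : IsCoarsePath g c m) (k : ℕ) : IsCoarsePath g (fun j => c (k + j)) (m - k) :=
  fun i hi => hc (k + i) (by omega)

lemma exists_extend (hc : IsCoarsePath g c m) {p q : X} (hp : dist p (c 0) ≤ g)
    (hq : dist (c m) q ≤ g) :
    ∃ c' : ℕ → X, c' 0 = p ∧ c' (m + 2) = q ∧ (∀ i ≤ m, c' (i + 1) = c i) ∧
      IsCoarsePath g c' (m + 2) := by
  refine ⟨fun i => if i = 0 then p else if i ≤ m + 1 then c (i - 1) else q,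
    by simp, by simp, fun i hi => by simp [hi], fun i hi => ?_⟩
  rcases i with _ | i
  · simpa using hp
  rcases (show i < m ∨ i = m by omega) with hi | rfl
  · simpa [show i ≤ m by omega, show i + 1 ≤ m by omega] using hc i hi
  · simpa using hq

end IsCoarsePath

section Hyperbolic

variable {X : Type*} [MetricSpace X] {δ : ℝ}

/-- Bisect the path: each halving costs `δ` by slimness of the triangle over the two halves. -/
theorem exists_dist_le_of_isCoarsePath (hgeo : GeodesicSpace X) (hslim : SlimTriangles X δ)
    {g : ℝ} (hg : 0 ≤ g) (n : ℕ) :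
    ∀ m ≤ 2 ^ n, ∀ c : ℕ → X, IsCoarsePath g c m → ∀ γ : ℝ → X, ∀ a b : ℝ,
      GeodesicFrom γ a b (c 0) (c m) →
      ∀ t ∈ Icc a b, ∃ i ≤ m, dist (γ t) (c i) ≤ n * δ + g / 2 := by
  induction n with
  | zero =>
    intro m hm c hc γ a b hγ t ht
    have hend : dist (c 0) (c m) ≤ g := by
      interval_cases m
      · simpa using hg
      · exact hc 0 one_pos
    have hsum := hγ.dist_add_dist ht
    rcases le_total (dist (γ t) (c 0)) (dist (γ t) (c m)) with h | h
    · exact ⟨0, Nat.zero_le _, by push_cast; linarith⟩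
    · exact ⟨m, le_rfl, by push_cast; linarith⟩
  | succ n ih =>
    intro m hm c hc γ a b hγ t ht
    have hkm : m / 2 ≤ m := Nat.div_le_self m 2
    obtain ⟨σ₁, hσ₁⟩ := hgeo (c 0) (c (m / 2))
    obtain ⟨σ₂, hσ₂⟩ := hgeo (c (m / 2)) (c m)
    rcases hslim _ _ _ σ₁ σ₂ γ _ _ _ _ _ _ hσ₁ hσ₂ hγ t ht with ⟨s, hs, hd⟩ | ⟨s, hs, hd⟩
    · obtain ⟨i, hi, hdi⟩ := ih (m / 2) (by omega) c (hc.of_le hkm) σ₁ _ _ hσ₁ s hs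
      refine ⟨i, hi.trans hkm, ?_⟩
      calc dist (γ t) (c i) ≤ dist (γ t) (σ₁ s) + dist (σ₁ s) (c i) := dist_triangle _ _ _
        _ ≤ (n + 1 : ℕ) * δ + g / 2 := by push_cast; linarith
    · have hσ₂' : GeodesicFrom σ₂ 0 (dist (c (m / 2)) (c m)) (c (m / 2 + 0))
          (c (m / 2 + (m - m / 2))) := by
        rwa [Nat.add_zero, Nat.add_sub_cancel' hkm]
      obtain ⟨i, hi, hdi⟩ := ih (m - m / 2) (by omega) _ (hc.shift (m / 2)) σ₂ _ _ hσ₂' s hs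
      refine ⟨m / 2 + i, by omega, ?_⟩
      calc dist (γ t) (c (m / 2 + i)) ≤ dist (γ t) (σ₂ s) + dist (σ₂ s) (c (m / 2 + i)) :=
            dist_triangle _ _ _
        _ ≤ (n + 1 : ℕ) * δ + g / 2 := by push_cast; linarith

end Hyperbolic

section Retraction

variable {X : Type*} [MetricSpace X] {U : Set X} {ρ : X → X} {r δ : ℝ}

/-- The path is `ρ` applied to the integer points of a geodesic from `a` to `b`. -/
lemma exists_isCoarsePath_of_retraction (hgeo : GeodesicSpace X) (hρU : ∀ x, ρ x ∈ U)
    (hρid : ∀ x ∈ U, ρ x = x) (hρlip : ∀ x y, dist (ρ x) (ρ y) ≤ r * dist x y + r)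
    {a b : X} (ha : a ∈ U) (hb : b ∈ U) :
    ∃ n : ℕ, ∃ c : ℕ → X, c 0 = a ∧ c n = b ∧ (n : ℝ) ≤ dist a b + 1 ∧
      IsCoarsePath (2 * r) c n ∧ ∀ i, c i ∈ U := by
  obtain ⟨σ, hσ⟩ := hgeo a b
  have hr : 0 ≤ r := by simpa using hρlip a a
  have hmem : ∀ w : ℝ, 0 ≤ w → min w (dist a b) ∈ Icc 0 (dist a b) :=
    fun w hw => ⟨le_min hw dist_nonneg, min_le_right _ _⟩
  refine ⟨⌈dist a b⌉₊, fun i => ρ (σ (min i (dist a b))), ?_, ?_,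
    (Nat.ceil_lt_add_one dist_nonneg).le, fun i _ => ?_, fun i => hρU _⟩
  · simp [hσ.2.2.1, hρid a ha]
  · simp [min_eq_right (Nat.le_ceil (dist a b)), hσ.2.2.2, hρid b hb]
  · have hstep : dist (σ (min (i : ℝ) (dist a b))) (σ (min ((i + 1 : ℕ) : ℝ) (dist a b))) ≤ 1 := by
      rw [hσ.2.1 _ (hmem _ (by positivity)) _ (hmem _ (by positivity))]
      calc _ ≤ max |(i : ℝ) - (i + 1 : ℕ)| |dist a b - dist a b| := abs_min_sub_min_le_max _ _ _ _
        _ = 1 := by simp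
    calc _ ≤ r * dist (σ (min (i : ℝ) (dist a b))) (σ (min ((i + 1 : ℕ) : ℝ) (dist a b))) + r :=
          hρlip _ _
      _ ≤ r * 1 + r := by gcongr
      _ = 2 * r := by ring

lemma exists_isCoarsePath_via_retraction (hgeo : GeodesicSpace X) (hρU : ∀ x, ρ x ∈ U)
    (hρid : ∀ x ∈ U, ρ x = x) (hρlip : ∀ x y, dist (ρ x) (ρ y) ≤ r * dist x y + r)
    {p q a b : X} (ha : a ∈ U) (hb : b ∈ U) {g : ℝ} (hpa : dist p a ≤ g) (hbq : dist b q ≤ g)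
    (hrg : 2 * r ≤ g) :
    ∃ m : ℕ, ∃ c : ℕ → X, c 0 = p ∧ c m = q ∧ (m : ℝ) ≤ dist p q + 2 * g + 3 ∧
      IsCoarsePath g c m ∧ ∀ i ≤ m, c i = p ∨ c i = q ∨ c i ∈ U := by
  obtain ⟨n, c, hc0, hcn, hn, hc, hcU⟩ :=
    exists_isCoarsePath_of_retraction hgeo hρU hρid hρlip ha hb
  obtain ⟨c', hc'0, hc'n, hc'c, hc'⟩ := (hc.mono hrg).exists_extend (hc0 ▸ hpa) (hcn ▸ hbq)
  refine ⟨n + 2, c', hc'0, hc'n, ?_, hc', fun i hi => ?_⟩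
  · have := dist_triangle4 a p q b
    push_cast
    linarith [dist_comm a p, dist_comm q b]
  rcases i with _ | i
  · exact .inl hc'0
  rcases (show i ≤ n ∨ i = n + 1 by omega) with hi | rfl
  · exact .inr (.inr (hc'c i hi ▸ hcU i))
  · exact .inr (.inl hc'n)

theorem infDist_le_of_isMaxOn (hgeo : GeodesicSpace X) (hslim : SlimTriangles X δ)
    (hρU : ∀ x, ρ x ∈ U) (hρid : ∀ x ∈ U, ρ x = x)
    (hρlip : ∀ x y, dist (ρ x) (ρ y) ≤ r * dist x y + r)
    {γ : ℝ → X} {a b : ℝ} {x y : X} (hγ : GeodesicFrom γ a b x y) (hx : x ∈ U) (hy : y ∈ U)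
    {s₀ : ℝ} (hs₀ : s₀ ∈ Icc a b) (hmax : IsMaxOn (fun s => infDist (γ s) U) (Icc a b) s₀) :
    infDist (γ s₀) U ≤ 160 * δ ^ 2 + 4 * r + 3 := by
  set D := infDist (γ s₀) U
  have hr : 0 ≤ r := by simpa using hρlip x x
  have hD0 : 0 ≤ D := infDist_nonneg
  have hDa : D ≤ s₀ - a := hγ.dist_left hs₀ ▸ infDist_le_dist_of_mem hx
  have hDb : D ≤ b - s₀ := hγ.dist_right hs₀ ▸ infDist_le_dist_of_mem hy
  have hu : s₀ - D ∈ Icc a b := ⟨by linarith, by linarith [hs₀.2]⟩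
  have hv : s₀ + D ∈ Icc a b := ⟨by linarith [hs₀.1], by linarith⟩
  have hdist : ∀ s ∈ Icc a b, dist (γ s₀) (γ s) = |s₀ - s| := hγ.2.1 s₀ hs₀
  have hnear : ∀ s ∈ Icc a b, ∃ p ∈ U, dist (γ s) p ≤ D + 1 := fun s hs =>
    have ⟨p, hp, h⟩ := (infDist_lt_iff ⟨x, hx⟩).1 ((hmax hs).trans_lt (lt_add_one D))
    ⟨p, hp, h.le⟩
  obtain ⟨a', ha', hua'⟩ := hnear _ hu
  obtain ⟨b', hb', hvb'⟩ := hnear _ hv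
  obtain ⟨m, c, hc0, hcm, hm, hc, hcU⟩ := exists_isCoarsePath_via_retraction hgeo hρU hρid
    hρlip ha' hb' (g := D + 2 * r + 1) (by linarith) (by rw [dist_comm]; linarith) (by linarith)
  set n := Nat.clog 2 m
  obtain ⟨i, hi, hdi⟩ := exists_dist_le_of_isCoarsePath hgeo hslim (by linarith) n m
    (Nat.le_pow_clog one_lt_two _) c hc γ _ _
    (hc0 ▸ hcm ▸ hγ.restrict hu.1 (by linarith) hv.2) s₀ ⟨by linarith, by linarith⟩
  have hfar : D ≤ dist (γ s₀) (c i) := by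
    rcases hcU i hi with h | h | h
    · rw [h, hdist _ hu]; simp [abs_of_nonneg hD0]
    · rw [h, hdist _ hv]; simp [abs_of_nonneg hD0]
    · exact infDist_le_dist_of_mem h
  have huv : dist (γ (s₀ - D)) (γ (s₀ + D)) = 2 * D := by
    rw [hγ.2.1 _ hu _ hv, abs_of_nonpos (by linarith)]; ring
  have hn : (n : ℝ) ^ 2 ≤ 8 * m := by exact_mod_cast Nat.clog_two_sq_le m
  -- `D ≤ n δ + (D + 2r + 1) / 2` with `n ^ 2 = O(D + r)`; AM-GM gives `2 δ n ≤ n ^ 2 / 80 + 80 δ ^ 2`.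
  nlinarith [sq_nonneg ((n : ℝ) - 80 * δ)]

end Retraction

theorem stmt8_general (δ r : ℝ) :
    ∃ K : ℝ, ∀ (X : Type) [inst : MetricSpace X] (U : Set X) (ρ : X → X),
      GeodesicSpace X → SlimTriangles X δ →
      (∀ x : X, ρ x ∈ U) → (∀ x ∈ U, ρ x = x) →
      (∀ x y : X, dist (ρ x) (ρ y) ≤ r * dist x y + r) →
      QuasiconvexSet K U := by
  refine ⟨160 * δ ^ 2 + 4 * r + 4,
    fun X _ U ρ hgeo hslim hρU hρid hρlip x hx y hy γ a b hγ t ht => ?_⟩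
  obtain ⟨s₀, hs₀, hmax⟩ := isCompact_Icc.exists_isMaxOn ⟨t, ht⟩
    ((continuous_infDist_pt U).comp_continuousOn hγ.2.1.continuousOn)
  have hbound := infDist_le_of_isMaxOn hgeo hslim hρU hρid hρlip hγ hx hy hs₀ hmax
  obtain ⟨p, hp, hdist⟩ :=
    (infDist_lt_iff ⟨x, hx⟩).1 ((hmax ht).trans_lt (hbound.trans_lt (lt_add_one _)))
  exact ⟨p, hp, by linarith⟩

theorem stmt8 (δ r : ℝ) (hδ : 0 ≤ δ) (hr : 1 ≤ r) :
    ∃ K : ℝ, ∀ (X : Type) [inst : MetricSpace X] (U : Set X) (ρ : X → X),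
      GeodesicSpace X → SlimTriangles X δ →
      (∀ x : X, ρ x ∈ U) → (∀ x ∈ U, ρ x = x) →
      (∀ x y : X, dist (ρ x) (ρ y) ≤ r * dist x y + r) →
      QuasiconvexSet K U :=
  stmt8_general δ r
end

section
/- Let X be a δ-hyperbolic geodesic metric space and U a k-quasiconvex subset. For any x ∈ X and y ∈ U, if p is a nearest point projection of x on U, then the arclength parametrization of the concatenation [x,p] ∪ [p,y] of geodesics is a (3+2k)-quasigeodesic in X. -/
open Metric Set
open scoped NNReal

theorem stmt9 {X : Type*} [MetricSpace X] (δ k : ℝ) (hδ : 0 ≤ δ) (hk : 0 ≤ k)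
    (hgeo : GeodesicSpace X) (hhyp : SlimTriangles X δ)
    (U : Set X) (hU : QuasiconvexSet k U) (x y p : X) (hy : y ∈ U)
    (hp : NearestPointProj U x p)
    (γ₁ γ₂ : ℝ → X)
    (h₁ : GeodesicFrom γ₁ 0 (dist x p) x p)
    (h₂ : GeodesicFrom γ₂ 0 (dist p y) p y) :
    QuasigeodesicOn (3 + 2 * k)
      (fun t => if t ≤ dist x p then γ₁ t else γ₂ (t - dist x p))
      0 (dist x p + dist p y) := by
  set d1 := dist x p with hd1
  set d2 := dist p y with hd2
  have hd1n : 0 ≤ d1 := dist_nonneg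
  have hd2n : 0 ≤ d2 := dist_nonneg
  have hlam : (3 : ℝ) ≤ 3 + 2 * k := by linarith
  -- main asymmetric claim
  have key : ∀ s ∈ Set.Icc (0:ℝ) (d1 + d2), ∀ t ∈ Set.Icc (0:ℝ) (d1 + d2), s ≤ t →
      |s - t| / (3 + 2 * k) - (3 + 2 * k) ≤
        dist ((fun t => if t ≤ d1 then γ₁ t else γ₂ (t - d1)) s)
             ((fun t => if t ≤ d1 then γ₁ t else γ₂ (t - d1)) t) ∧
        dist ((fun t => if t ≤ d1 then γ₁ t else γ₂ (t - d1)) s)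
             ((fun t => if t ≤ d1 then γ₁ t else γ₂ (t - d1)) t) ≤
          (3 + 2 * k) * |s - t| + (3 + 2 * k) := by
    intro s hs t ht hst
    have habs : |s - t| = t - s := by rw [abs_sub_comm]; exact abs_of_nonneg (by linarith)
    by_cases hscase : t ≤ d1
    · -- both on γ₁
      have hs1 : s ≤ d1 := le_trans hst hscase
      simp only [if_pos hs1, if_pos hscase]
      have := h₁.2.1 s ⟨hs.1, hs1⟩ t ⟨ht.1, hscase⟩
      rw [this, habs]
      constructor
      · have h1 : (t - s) / (3 + 2 * k) ≤ t - s := by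
          rw [div_le_iff₀ (by linarith)]
          nlinarith
        linarith
      · nlinarith
    · push_neg at hscase
      by_cases hscase2 : s ≤ d1
      · -- cross case: a on γ₁, b on γ₂
        simp only [if_pos hscase2, if_neg (not_le.mpr hscase)]
        set a := γ₁ s
        set b := γ₂ (t - d1)
        have htm : t - d1 ∈ Set.Icc (0:ℝ) d2 := ⟨by linarith, by linarith [ht.2]⟩
        have hxa : dist x a = s := by
          have := h₁.2.1 0 ⟨le_refl _, hd1n⟩ s ⟨hs.1, hscase2⟩
          rw [h₁.2.2.1] at this
          rw [this, abs_sub_comm, sub_zero, abs_of_nonneg hs.1]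
        have hap : dist a p = d1 - s := by
          have := h₁.2.1 s ⟨hs.1, hscase2⟩ d1 ⟨hd1n, le_refl _⟩
          rw [h₁.2.2.2] at this
          rw [this, abs_of_nonpos (by linarith)]
          ring
        have hpb : dist p b = t - d1 := by
          have := h₂.2.1 0 ⟨le_refl _, hd2n⟩ (t - d1) htm
          rw [h₂.2.2.1] at this
          rw [this, abs_sub_comm, sub_zero, abs_of_nonneg htm.1]
        -- quasiconvexity: point q ∈ U near b
        obtain ⟨q, hqU, hbq⟩ := hU p hp.1 y hy γ₂ 0 d2 h₂ (t - d1) htm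
        -- projection property
        have hproj : d1 ≤ dist x q := hp.2 q hqU
        have chain : dist x q ≤ dist x a + dist a b + dist b q := by
          calc dist x q ≤ dist x b + dist b q := dist_triangle _ _ _
            _ ≤ dist x a + dist a b + dist b q := by
                linarith [dist_triangle x a b]
        have low1 : d1 - s - k ≤ dist a b := by
          rw [hxa] at chain; linarith
        have low2 : (t - d1) - (d1 - s) ≤ dist a b := by
          have := dist_triangle p a b
          rw [dist_comm p a, hap] at this
          rw [hpb] at this
          linarith
        have upper : dist a b ≤ t - s := by
          have := dist_triangle a p b
          rw [hap, hpb] at this; linarith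
        rw [habs]
        constructor
        · -- 3 * dist a b ≥ t - s - 2k
          have h3 : (t - s) - 2 * k ≤ 3 * dist a b := by linarith
          have h4 : (t - s) / (3 + 2 * k) ≤ (t - s) / 3 :=
            div_le_div_of_nonneg_left (by linarith) (by norm_num) hlam
          have h5 : (t - s) / 3 - (2 * k) / 3 ≤ dist a b := by linarith
          have h6 : (2 * k) / 3 ≤ 3 + 2 * k := by linarith
          linarith
        · have hd0 : 0 ≤ dist a b := dist_nonneg
          nlinarith
      · -- both on γ₂
        push_neg at hscase2
        simp only [if_neg (not_le.mpr hscase2), if_neg (not_le.mpr hscase)]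
        have := h₂.2.1 (s - d1) ⟨by linarith, by linarith [hs.2]⟩
                       (t - d1) ⟨by linarith, by linarith [ht.2]⟩
        have heq : s - d1 - (t - d1) = s - t := by ring
        rw [heq] at this
        rw [this, habs]
        constructor
        · have h1 : (t - s) / (3 + 2 * k) ≤ t - s := by
            rw [div_le_iff₀ (by linarith)]
            nlinarith
          linarith
        · nlinarith
  intro s hs t ht
  rcases le_total s t with h | h
  · exact key s hs t ht h
  · have := key t ht s hs h
    rw [dist_comm, abs_sub_comm] at this
    exact this
end

section
/- Let X be a δ-hyperbolic geodesic metric space, and Y_1, Y_2 k-quasiconvex subsets of X. Let Z ⊆ X be nonempty with Z ⊆ N_r(Y_1) ∩ N_r(Y_2) for some r ≥ 0. Then Z coarsely separates Y_1 and Y_2 if and only if Z is a coarse intersection of Y_1 and Y_2. -/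
open Metric Set
open scoped NNReal

/-- `Z` coarsely separates `Y₁` and `Y₂`: every quasigeodesic from `Y₁` to `Y₂` passes
through a uniform neighbourhood of `Z`. -/
def CoarselySeparates {X : Type*} [MetricSpace X] (Z Y₁ Y₂ : Set X) : Prop :=
  ∀ k' : ℝ, 1 ≤ k' → ∃ R : ℝ, 0 ≤ R ∧ ∀ (γ : ℝ → X) (a b : ℝ),
    a ≤ b → QuasigeodesicOn k' γ a b → γ a ∈ Y₁ → γ b ∈ Y₂ →
    ∃ t ∈ Set.Icc a b, ∃ z ∈ Z, dist (γ t) z ≤ R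

/-- `Z` is a coarse intersection of `Y₁` and `Y₂`. -/
def CoarseIntersection {X : Type*} [MetricSpace X] (Z Y₁ Y₂ : Set X) : Prop :=
  (∃ r : ℝ, 0 ≤ r ∧ ∀ z ∈ Z, (∃ y ∈ Y₁, dist z y ≤ r) ∧ (∃ y ∈ Y₂, dist z y ≤ r)) ∧
  ∀ C : ℝ, 0 ≤ C → ∃ D : ℝ, 0 ≤ D ∧ ∀ x : X,
    (∃ y ∈ Y₁, dist x y ≤ C) → (∃ y ∈ Y₂, dist x y ≤ C) → ∃ z ∈ Z, dist x z ≤ D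

section Helpers

variable {X : Type*} [MetricSpace X]

lemma geo_const (u : X) : GeodesicFrom (fun _ : ℝ => u) 0 (dist u u) u u := by
  rw [dist_self]
  refine ⟨le_rfl, ?_, rfl, rfl⟩
  intro s hs t ht
  have hs0 : s = 0 := le_antisymm hs.2 hs.1
  have ht0 : t = 0 := le_antisymm ht.2 ht.1
  simp [hs0, ht0]

lemma geo_rev {ζ : ℝ → X} {d : ℝ} {u w : X} (h : GeodesicFrom ζ 0 d u w) :
    GeodesicFrom (fun s => ζ (d - s)) 0 d w u := by
  obtain ⟨hd, hiso, h0, h1⟩ := h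
  refine ⟨hd, ?_, by simpa, by simpa⟩
  intro s hs t ht
  have := hiso (d - s) ⟨by linarith [hs.2], by linarith [hs.1]⟩ (d - t)
    ⟨by linarith [ht.2], by linarith [ht.1]⟩
  rw [this, abs_sub_comm]
  congr 1
  ring

lemma geo_seg {g : ℝ → X} {L : ℝ} (hg : IsGeodesicOn g 0 L) {s₁ s₂ : ℝ}
    (h₁ : s₁ ∈ Set.Icc 0 L) (h₂ : s₂ ∈ Set.Icc 0 L) :
    ∃ η : ℝ → X, GeodesicFrom η 0 (dist (g s₁) (g s₂)) (g s₁) (g s₂) ∧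
      ∀ u ∈ Set.Icc (0:ℝ) (dist (g s₁) (g s₂)), ∃ s ∈ Set.Icc 0 L, η u = g s := by
  have hd : dist (g s₁) (g s₂) = |s₁ - s₂| := hg s₁ h₁ s₂ h₂
  rcases le_total s₁ s₂ with hle | hle
  · have hd' : dist (g s₁) (g s₂) = s₂ - s₁ := by rw [hd, abs_sub_comm, abs_of_nonneg (by linarith)]
    refine ⟨fun u => g (s₁ + u), ⟨by rw [hd']; linarith, ?_, by simp, by rw [hd']; ring_nf⟩, ?_⟩
    · intro s hs t ht
      rw [hd'] at hs ht
      have := hg (s₁ + s) ⟨by linarith [hs.1, h₁.1], by linarith [hs.2, h₂.2]⟩ (s₁ + t)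
        ⟨by linarith [ht.1, h₁.1], by linarith [ht.2, h₂.2]⟩
      rw [this]
      congr 1
      ring
    · intro u hu
      rw [hd'] at hu
      exact ⟨s₁ + u, ⟨by linarith [hu.1, h₁.1], by linarith [hu.2, h₂.2]⟩, rfl⟩
  · have hd' : dist (g s₁) (g s₂) = s₁ - s₂ := by rw [hd, abs_of_nonneg (by linarith)]
    refine ⟨fun u => g (s₁ - u), ⟨by rw [hd']; linarith, ?_, by simp, by rw [hd']; ring_nf⟩, ?_⟩
    · intro s hs t ht
      rw [hd'] at hs ht
      have := hg (s₁ - s) ⟨by linarith [hs.2, h₂.1], by linarith [hs.1, h₁.2]⟩ (s₁ - t)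
        ⟨by linarith [ht.2, h₂.1], by linarith [ht.1, h₁.2]⟩
      rw [this, abs_sub_comm]
      congr 1
      ring
    · intro u hu
      rw [hd'] at hu
      exact ⟨s₁ - u, ⟨by linarith [hu.2, h₂.1], by linarith [hu.1, h₁.2]⟩, rfl⟩

lemma halving {δ J : ℝ} (hJ : 0 ≤ J) (hgeo : GeodesicSpace X) (hhyp : SlimTriangles X δ) :
    ∀ (m n : ℕ) (c : ℕ → X), n ≤ 2 ^ m → (∀ i, i < n → dist (c i) (c (i + 1)) ≤ J) →
      ∀ (h : ℝ → X) (α β : ℝ), GeodesicFrom h α β (c 0) (c n) →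
        ∀ p ∈ Set.Icc α β, ∃ i ≤ n, dist (h p) (c i) ≤ δ * m + J := by
  intro m
  induction m with
  | zero =>
    intro n c hn hc h α β hgf p hp
    obtain ⟨hab, hiso, hα, hβ⟩ := hgf
    have hd2 : dist (h α) (h β) = β - α := by
      rw [hiso α ⟨le_rfl, hab⟩ β ⟨hab, le_rfl⟩, abs_sub_comm, abs_of_nonneg (by linarith)]
    have hpd : dist (h p) (h α) = p - α := by
      rw [hiso p hp α ⟨le_rfl, hab⟩, abs_of_nonneg (by linarith [hp.1])]
    interval_cases n
    · -- n = 0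
      have h0 : dist (h α) (h β) = 0 := by rw [hα, hβ, dist_self]
      refine ⟨0, le_rfl, ?_⟩
      have : p = α := le_antisymm (by linarith [hp.2, hd2 ▸ h0]) hp.1
      rw [this, hα]
      simp [hJ]
    · -- n = 1
      refine ⟨0, by omega, ?_⟩
      have h1 : dist (c 0) (c 1) ≤ J := hc 0 (by omega)
      have : dist (h p) (c 0) ≤ J := by
        rw [← hα]
        rw [hpd]
        have : β - α ≤ J := by rw [← hd2, hα, hβ]; exact h1
        linarith [hp.2]
      simpa using this
  | succ m ih =>
    intro n c hn hc h α β hgf p hp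
    set q := (n + 1) / 2 with hq
    have h2m : 2 ^ (m + 1) = 2 * 2 ^ m := by ring
    have hq1 : q ≤ 2 ^ m := by omega
    have hq2 : n - q ≤ 2 ^ m := by omega
    have hq3 : q ≤ n := by omega
    obtain ⟨h₁, hh₁⟩ := hgeo (c 0) (c q)
    obtain ⟨h₂, hh₂⟩ := hgeo (c q) (c n)
    rcases hhyp (c 0) (c q) (c n) h₁ h₂ h 0 (dist (c 0) (c q)) 0 (dist (c q) (c n)) α β
      hh₁ hh₂ hgf p hp with ⟨s, hs, hd⟩ | ⟨s, hs, hd⟩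
    · obtain ⟨i, hi, hdi⟩ := ih q c hq1 (fun i hi => hc i (lt_of_lt_of_le hi hq3))
        h₁ 0 (dist (c 0) (c q)) hh₁ s hs
      refine ⟨i, hi.trans hq3, ?_⟩
      have := dist_triangle (h p) (h₁ s) (c i)
      push_cast
      push_cast at hdi
      linarith
    · have hend : (fun i => c (q + i)) (n - q) = c n := by
        simp only []
        congr 1
        omega
      have hc' : ∀ i, i < n - q → dist ((fun i => c (q + i)) i) ((fun i => c (q + i)) (i + 1)) ≤ J := by
        intro i hi
        simp only []
        have : q + (i + 1) = (q + i) + 1 := by omega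
        rw [this]
        exact hc (q + i) (by omega)
      have hh₂' : GeodesicFrom h₂ 0 (dist (c q) (c n)) ((fun i => c (q + i)) 0) ((fun i => c (q + i)) (n - q)) := by
        rw [hend]
        simpa using hh₂
      obtain ⟨i, hi, hdi⟩ := ih (n - q) (fun i => c (q + i)) hq2 hc' h₂ 0 (dist (c q) (c n)) hh₂' s hs
      refine ⟨q + i, by omega, ?_⟩
      have := dist_triangle (h p) (h₂ s) (c (q + i))
      push_cast
      push_cast at hdi
      linarith

end Helpers

lemma sqrt_add_le' (x y : ℝ) (hx : 0 ≤ x) (hy : 0 ≤ y) :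
    Real.sqrt (x + y) ≤ Real.sqrt x + Real.sqrt y := by
  rw [show Real.sqrt x + Real.sqrt y = Real.sqrt ((Real.sqrt x + Real.sqrt y)^2) from
    (Real.sqrt_sq (by positivity)).symm]
  apply Real.sqrt_le_sqrt
  nlinarith [Real.sq_sqrt hx, Real.sq_sqrt hy, Real.sqrt_nonneg x, Real.sqrt_nonneg y,
    mul_nonneg (Real.sqrt_nonneg x) (Real.sqrt_nonneg y)]

lemma solve_sqrt {P Q D : ℝ} (hP : 0 ≤ P) (hQ : 0 ≤ Q) (hD : 0 ≤ D)
    (h : D ≤ P + Q * Real.sqrt D) : D ≤ (Q + Real.sqrt P)^2 := by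
  by_contra hc
  push_neg at hc
  have h1 : Q + Real.sqrt P < Real.sqrt D :=
    (Real.lt_sqrt (by positivity)).mpr hc
  nlinarith [Real.sq_sqrt hD, Real.sq_sqrt hP, Real.sqrt_nonneg D, Real.sqrt_nonneg P]

lemma log_est (n : ℕ) : (Nat.log 2 n : ℝ) ≤ 3 * Real.sqrt n := by
  rcases Nat.eq_zero_or_pos n with h | h
  · simp [h]
  have hn1 : (1:ℝ) ≤ (n:ℝ) := by exact_mod_cast h
  have h1 : (2:ℝ)^(Nat.log 2 n) ≤ (n:ℝ) := by exact_mod_cast Nat.pow_log_le_self 2 (by omega)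
  have h2 : (Nat.log 2 n : ℝ) * Real.log 2 ≤ Real.log n := by
    have h0 := Real.log_le_log (by positivity) h1
    rwa [Real.log_pow] at h0
  have h3 : Real.log n ≤ 2 * Real.sqrt n := by
    have hsp : (0:ℝ) < Real.sqrt n := Real.sqrt_pos.mpr (by linarith)
    have hs : Real.log (Real.sqrt n) ≤ Real.sqrt n - 1 := Real.log_le_sub_one_of_pos hsp
    have he : Real.log (Real.sqrt n) = Real.log n / 2 := Real.log_sqrt (by linarith)
    linarith
  have h4 : (0.6931471803:ℝ) < Real.log 2 := Real.log_two_gt_d9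
  nlinarith [Real.sqrt_nonneg (n:ℝ), (show (0:ℝ) ≤ (Nat.log 2 n : ℝ) by positivity)]

set_option maxHeartbeats 1600000
lemma morse {X : Type*} [MetricSpace X] (δ k' : ℝ) (hδ : 0 ≤ δ) (hk' : 1 ≤ k')
    (hgeo : GeodesicSpace X) (hhyp : SlimTriangles X δ) :
    ∃ M : ℝ, 0 ≤ M ∧ ∀ (γ : ℝ → X) (a b : ℝ) (g : ℝ → X) (L : ℝ), a ≤ b →
      QuasigeodesicOn k' γ a b → GeodesicFrom g 0 L (γ a) (γ b) →
      ∀ t ∈ Set.Icc a b, ∃ s ∈ Set.Icc 0 L, dist (γ t) (g s) ≤ M := by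
  have hk0 : (0:ℝ) < k' := lt_of_lt_of_le one_pos hk'
  have hk0le : (0:ℝ) ≤ k' := hk0.le
  set c4 : ℝ := 3*k'^2 + 4 with hc4
  set c3 : ℝ := 2*k'^3 + 3*k'^2 + 4*k' + 4 + 8*δ with hc3
  set A1 : ℝ := Real.sqrt (4*k') with hA1
  set A2 : ℝ := Real.sqrt (2*k'^2 + 4*k' + 1) with hA2
  set Q : ℝ := 3*c4*δ*A1 with hQ
  set P : ℝ := c4*(3*δ*A2 + δ + 2*k') + c3 with hP
  have hc40 : 0 ≤ c4 := by rw [hc4]; positivity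
  have hc30 : 0 ≤ c3 := by rw [hc3]; positivity
  have hA10 : 0 ≤ A1 := Real.sqrt_nonneg _
  have hA20 : 0 ≤ A2 := Real.sqrt_nonneg _
  have hQ0 : 0 ≤ Q := by rw [hQ]; positivity
  have hP0 : 0 ≤ P := by rw [hP]; positivity
  refine ⟨(Q + Real.sqrt P)^2 + 1, by positivity, ?_⟩
  intro γ a b g L hab hquasi hg
  obtain ⟨hL0, hgiso, hg0, hgL⟩ := hg
  set Img : Set X := g '' Set.Icc 0 L with hImg
  have hImgne : Img.Nonempty := ⟨g 0, 0, ⟨le_rfl, hL0⟩, rfl⟩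
  have hmemImg : ∀ s ∈ Set.Icc (0:ℝ) L, g s ∈ Img := fun s hs => ⟨s, hs, rfl⟩
  have hγaI : γ a ∈ Img := by rw [← hg0]; exact hmemImg 0 ⟨le_rfl, hL0⟩
  have hγbI : γ b ∈ Img := by rw [← hgL]; exact hmemImg L ⟨hL0, le_rfl⟩
  -- the sup of distances to the geodesic
  set f : ℝ → ℝ := fun t => Metric.infDist (γ t) Img with hf
  set D : ℝ := sSup (f '' Set.Icc a b) with hD
  have hbdd : BddAbove (f '' Set.Icc a b) := by
    refine ⟨k' * (b - a) + k', ?_⟩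
    rintro y ⟨t, ht, rfl⟩
    have h1 : f t ≤ dist (γ t) (γ a) := Metric.infDist_le_dist_of_mem hγaI
    have h2 := (hquasi t ht a ⟨le_rfl, hab⟩).2
    have h3 : |t - a| ≤ b - a := by rw [abs_of_nonneg (by linarith [ht.1])]; linarith [ht.2]
    nlinarith
  have hfa : ∀ t ∈ Set.Icc a b, f t ≤ D := fun t ht => le_csSup hbdd ⟨t, ht, rfl⟩
  have hD0 : 0 ≤ D := by
    have h1 : f a = 0 := Metric.infDist_zero_of_mem hγaI
    have := hfa a ⟨le_rfl, hab⟩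
    linarith
  have hex : ∃ t₀ ∈ Set.Icc a b, D - 1 < f t₀ := by
    obtain ⟨y₀, hy₀, hgt⟩ := exists_lt_of_lt_csSup
      (Set.Nonempty.image f (Set.nonempty_Icc.mpr hab)) (show D - 1 < D by linarith)
    obtain ⟨t₀, ht₀mem, rfl⟩ := hy₀
    exact ⟨t₀, ht₀mem, hgt⟩
  clear_value D
  clear hD
  -- core : D is bounded
  have hcore : D ≤ (Q + Real.sqrt P)^2 := by
    obtain ⟨t₀, ht₀mem, ht₀gt⟩ := hex
    have hD1 : ∀ w ∈ Img, D - 1 ≤ dist (γ t₀) w := by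
      intro w hw
      have h1 : Metric.infDist (γ t₀) Img ≤ dist (γ t₀) w := Metric.infDist_le_dist_of_mem hw
      have h2 : D - 1 < Metric.infDist (γ t₀) Img := ht₀gt
      linarith
    set Δ : ℝ := k' * (2*D + 2 + k') with hΔ
    have hΔ0 : 0 ≤ Δ := by rw [hΔ]; positivity
    clear_value Δ
    set t₁ : ℝ := max a (t₀ - Δ) with ht₁def
    set t₂ : ℝ := min b (t₀ + Δ) with ht₂def
    have ht₁mem : t₁ ∈ Set.Icc a b :=
      ⟨le_max_left _ _, max_le hab (by linarith [ht₀mem.2])⟩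
    have ht₂mem : t₂ ∈ Set.Icc a b :=
      ⟨le_min hab (by linarith [ht₀mem.1]), min_le_left _ _⟩
    have ht₁t₀ : t₁ ≤ t₀ := max_le ht₀mem.1 (by linarith)
    have ht₀t₂ : t₀ ≤ t₂ := le_min ht₀mem.2 (by linarith)
    have ht₁₂ : t₁ ≤ t₂ := ht₁t₀.trans ht₀t₂
    have ht₁ge : t₀ - Δ ≤ t₁ := le_max_right _ _
    have ht₂le : t₂ ≤ t₀ + Δ := min_le_right _ _
    have ht₁eqr : a ≤ t₀ - Δ → t₁ = t₀ - Δ := fun hcl => max_eq_right hcl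
    have ht₁eql : t₀ - Δ < a → t₁ = a := fun hcl => max_eq_left hcl.le
    have ht₂eqr : t₀ + Δ ≤ b → t₂ = t₀ + Δ := fun hcl => min_eq_right hcl
    have ht₂eql : b < t₀ + Δ → t₂ = b := fun hcl => min_eq_left hcl.le
    clear_value t₁ t₂
    clear ht₁def ht₂def
    set u : X := γ t₁ with hu
    set v : X := γ t₂ with hv
    -- left connector
    have LC : ∃ w₁ ∈ Img, ∃ ζ₁ : ℝ → X, GeodesicFrom ζ₁ 0 (dist u w₁) u w₁ ∧
        ∀ s ∈ Set.Icc (0:ℝ) (dist u w₁), D - 1 ≤ dist (γ t₀) (ζ₁ s) := by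
      rcases le_or_gt a (t₀ - Δ) with hcl | hcl
      · have ht₁eq : t₁ = t₀ - Δ := ht₁eqr hcl
        have hflt : Metric.infDist (γ t₁) Img < D + 1 := by
          have := hfa t₁ ht₁mem
          simp only [hf] at this
          linarith
        obtain ⟨w₁, hw₁I, hw₁d⟩ := (Metric.infDist_lt_iff hImgne).mp hflt
        obtain ⟨ζ, hζ⟩ := hgeo u w₁
        refine ⟨w₁, hw₁I, ζ, hζ, ?_⟩
        intro s hs
        have h1 : dist u (ζ s) = s := by
          have h2 := hζ.2.1 0 ⟨le_rfl, dist_nonneg⟩ s hs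
          rw [hζ.2.2.1] at h2
          rw [h2, abs_of_nonpos (by linarith [hs.1])]
          ring
        have h2 : 2*D + 2 ≤ dist (γ t₀) u := by
          have hlow := (hquasi t₀ ht₀mem t₁ ht₁mem).1
          have habs : |t₀ - t₁| = Δ := by
            rw [ht₁eq, abs_of_nonneg (by linarith)]
            ring
          rw [habs] at hlow
          have hdiv : Δ / k' = 2*D + 2 + k' := by
            rw [hΔ]
            field_simp
          rw [hdiv] at hlow
          linarith
        have htri := dist_triangle (γ t₀) (ζ s) u
        have hsd : s ≤ dist u w₁ := hs.2
        rw [dist_comm (ζ s) u, h1] at htri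
        linarith
      · have ht₁eq : t₁ = a := ht₁eql hcl
        have huI : u ∈ Img := by rw [hu, ht₁eq]; exact hγaI
        refine ⟨u, huI, fun _ => u, by simpa [dist_self] using geo_const u, ?_⟩
        intro s _
        exact hD1 u huI
    -- right connector, plus the alternative used in Case I
    have RC : (∃ w₂ ∈ Img, ∃ ζ₂ : ℝ → X, GeodesicFrom ζ₂ 0 (dist v w₂) v w₂ ∧
        ∀ s ∈ Set.Icc (0:ℝ) (dist v w₂), D - 1 ≤ dist (γ t₀) (ζ₂ s)) ∧
        (Δ ≤ t₂ - t₀ ∨ D - 1 ≤ k' * (t₂ - t₀) + k') := by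
      rcases le_or_gt (t₀ + Δ) b with hcl | hcl
      · have ht₂eq : t₂ = t₀ + Δ := ht₂eqr hcl
        have hflt : Metric.infDist (γ t₂) Img < D + 1 := by
          have := hfa t₂ ht₂mem
          simp only [hf] at this
          linarith
        obtain ⟨w₂, hw₂I, hw₂d⟩ := (Metric.infDist_lt_iff hImgne).mp hflt
        obtain ⟨ζ, hζ⟩ := hgeo v w₂
        refine ⟨⟨w₂, hw₂I, ζ, hζ, ?_⟩, Or.inl (by rw [ht₂eq]; linarith)⟩
        intro s hs
        have h1 : dist v (ζ s) = s := by
          have h2 := hζ.2.1 0 ⟨le_rfl, dist_nonneg⟩ s hs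
          rw [hζ.2.2.1] at h2
          rw [h2, abs_of_nonpos (by linarith [hs.1])]
          ring
        have h2 : 2*D + 2 ≤ dist (γ t₀) v := by
          have hlow := (hquasi t₀ ht₀mem t₂ ht₂mem).1
          have habs : |t₀ - t₂| = Δ := by
            rw [ht₂eq, abs_of_nonpos (by linarith)]
            ring
          rw [habs] at hlow
          have hdiv : Δ / k' = 2*D + 2 + k' := by
            rw [hΔ]
            field_simp
          rw [hdiv] at hlow
          linarith
        have htri := dist_triangle (γ t₀) (ζ s) v
        have hsd : s ≤ dist v w₂ := hs.2
        rw [dist_comm (ζ s) v, h1] at htri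
        linarith
      · have ht₂eq : t₂ = b := ht₂eql hcl
        have hvI : v ∈ Img := by rw [hv, ht₂eq]; exact hγbI
        refine ⟨⟨v, hvI, fun _ => v, by simpa [dist_self] using geo_const v, ?_⟩, Or.inr ?_⟩
        · intro s _
          exact hD1 v hvI
        · have h1 := hD1 v hvI
          have h2 := (hquasi t₀ ht₀mem t₂ ht₂mem).2
          have habs : |t₀ - t₂| = t₂ - t₀ := by rw [abs_of_nonpos (by linarith)]; ring
          rw [habs] at h2
          linarith
    obtain ⟨w₁, hw₁I, ζ₁, hζ₁, hprop₁⟩ := LC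
    obtain ⟨⟨w₂, hw₂I, ζ₂, hζ₂, hprop₂⟩, hAlt⟩ := RC
    -- geodesic between w₁ and w₂ inside Img
    obtain ⟨s₁, hs₁, hw₁eq⟩ := hw₁I
    obtain ⟨s₂, hs₂, hw₂eq⟩ := hw₂I
    obtain ⟨η, hη, hηIm⟩ := geo_seg hgiso hs₁ hs₂
    rw [hw₁eq, hw₂eq] at hη hηIm
    -- geodesics of the triangles
    obtain ⟨θ, hθ⟩ := hgeo w₁ v
    obtain ⟨h, hh⟩ := hgeo u v
    -- the reversed right connector
    have hζ₂r : GeodesicFrom (fun s => ζ₂ (dist v w₂ - s)) 0 (dist w₂ v) w₂ v := by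
      rw [dist_comm w₂ v]
      exact geo_rev hζ₂
    -- (★★) : every point of [u,v] is far from γ t₀
    have hstar : ∀ p ∈ Set.Icc (0:ℝ) (dist u v), D - 1 - 2*δ ≤ dist (γ t₀) (h p) := by
      intro p hp
      rcases hhyp u w₁ v ζ₁ θ h 0 (dist u w₁) 0 (dist w₁ v) 0 (dist u v)
        hζ₁ hθ hh p hp with ⟨s, hs, hd⟩ | ⟨s, hs, hd⟩
      · have h1 := hprop₁ s hs
        have htri := dist_triangle (γ t₀) (h p) (ζ₁ s)
        linarith
      · -- point on θ : use triangle 2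
        rcases hhyp w₁ w₂ v η (fun s => ζ₂ (dist v w₂ - s)) θ 0 (dist w₁ w₂) 0 (dist w₂ v)
          0 (dist w₁ v) hη hζ₂r hθ s hs with ⟨s', hs', hd'⟩ | ⟨s', hs', hd'⟩
        · obtain ⟨σ, hσ, hησ⟩ := hηIm s' hs'
          have h1 : D - 1 ≤ dist (γ t₀) (η s') := by
            rw [hησ]
            exact hD1 _ (hmemImg σ hσ)
          have htri := dist_triangle4 (γ t₀) (h p) (θ s) (η s')
          linarith
        · have hs'' : dist v w₂ - s' ∈ Set.Icc (0:ℝ) (dist v w₂) := by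
            rw [dist_comm w₂ v] at hs'
            exact ⟨by linarith [hs'.2], by linarith [hs'.1]⟩
          have h1 : D - 1 ≤ dist (γ t₀) (ζ₂ (dist v w₂ - s')) := hprop₂ _ hs''
          have htri := dist_triangle4 (γ t₀) (h p) (θ s) (ζ₂ (dist v w₂ - s'))
          linarith
    -- discretized chain along γ from t₁ to t₂
    set n : ℕ := ⌈t₂ - t₁⌉₊ with hn
    set c : ℕ → X := fun i => γ (min (t₁ + i) t₂) with hc
    set mm : ℕ := Nat.log 2 n + 1 with hmm
    set E : ℝ := δ * mm + 2*k' with hE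
    have hE0 : 0 ≤ E := by rw [hE]; positivity
    clear_value E
    have hn2 : n ≤ 2 ^ mm := (Nat.lt_pow_succ_log_self one_lt_two n).le
    clear_value mm
    clear_value n
    have hτmem : ∀ r : ℝ, 0 ≤ r → min (t₁ + r) t₂ ∈ Set.Icc t₁ t₂ :=
      fun r hr => ⟨le_min (by linarith) ht₁₂, min_le_right _ _⟩
    have hτab : ∀ r : ℝ, 0 ≤ r → min (t₁ + r) t₂ ∈ Set.Icc a b :=
      fun r hr => ⟨ht₁mem.1.trans (hτmem r hr).1, (hτmem r hr).2.trans ht₂mem.2⟩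
    have hsubab : Set.Icc t₁ t₂ ⊆ Set.Icc a b := Set.Icc_subset_Icc ht₁mem.1 ht₂mem.2
    have hjumps : ∀ i, i < n → dist (c i) (c (i + 1)) ≤ 2*k' := by
      intro i _
      have e1 : c i = γ (min (t₁ + (i:ℝ)) t₂) := rfl
      have e2 : c (i+1) = γ (min (t₁ + ((i:ℝ)+1)) t₂) := by
        show γ (min (t₁ + ((i+1:ℕ):ℝ)) t₂) = _
        have e3 : ((i+1:ℕ):ℝ) = (i:ℝ)+1 := by push_cast; ring
        rw [e3]
      rw [e1, e2]
      have hm1 := hτab (i:ℝ) (by positivity)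
      have hm2 := hτab ((i:ℝ)+1) (by positivity)
      have h2 := (hquasi _ hm1 _ hm2).2
      have habs : |min (t₁ + (i:ℝ)) t₂ - min (t₁ + ((i:ℝ)+1)) t₂| ≤ 1 := by
        rcases le_total (t₁ + ((i:ℝ)+1)) t₂ with h4 | h4
        · rw [min_eq_left (by linarith), min_eq_left h4]
          rw [show t₁ + (i:ℝ) - (t₁ + ((i:ℝ)+1)) = -1 by ring]
          norm_num
        · rw [min_eq_right h4]
          rcases le_total (t₁ + (i:ℝ)) t₂ with h3 | h3
          · rw [min_eq_left h3]
            rw [abs_of_nonpos (by linarith)]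
            linarith
          · rw [min_eq_right h3]
            simp
      nlinarith [abs_nonneg (min (t₁ + (i:ℝ)) t₂ - min (t₁ + ((i:ℝ)+1)) t₂)]
    have hc0 : c 0 = u := by
      show γ (min (t₁ + ((0:ℕ):ℝ)) t₂) = u
      rw [show t₁ + ((0:ℕ):ℝ) = t₁ by push_cast; ring, min_eq_left ht₁₂]
    have hcn : c n = v := by
      show γ (min (t₁ + (n:ℝ)) t₂) = v
      have h5 := Nat.le_ceil (t₂ - t₁)
      rw [← hn] at h5
      rw [min_eq_right (by linarith)]
    have hgf' : GeodesicFrom h 0 (dist u v) (c 0) (c n) := by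
      rw [hc0, hcn]
      exact hh
    have hP1 : ∀ p ∈ Set.Icc (0:ℝ) (dist u v),
        ∃ t' ∈ Set.Icc t₁ t₂, dist (h p) (γ t') ≤ E := by
      intro p hp
      obtain ⟨i, hi, hdi⟩ := halving (by positivity : (0:ℝ) ≤ 2*k') hgeo hhyp mm n c hn2
        hjumps h 0 (dist u v) hgf' p hp
      refine ⟨min (t₁ + (i:ℝ)) t₂, hτmem (i:ℝ) (by positivity), ?_⟩
      rw [hE]
      exact hdi
    -- the gap estimate
    have hgap : ∀ t' ∈ Set.Icc t₁ t₂, ∀ p ∈ Set.Icc (0:ℝ) (dist u v),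
        dist (h p) (γ t') ≤ E → D - 1 - 2*δ - E - k' ≤ k' * |t' - t₀| := by
      intro t' ht' p hp hdE
      have h1 := hstar p hp
      have h2 := dist_triangle (γ t₀) (γ t') (h p)
      rw [dist_comm (γ t') (h p)] at h2
      have h3 := (hquasi t₀ ht₀mem t' (hsubab ht')).2
      have h4 : |t₀ - t'| = |t' - t₀| := abs_sub_comm _ _
      rw [h4] at h3
      linarith
    set G : ℝ := D - 1 - 2*δ - E - k' with hG
    clear_value G
    -- the set of "left-witnessed" points along [u,v]
    set A : Set ℝ := {p | p ∈ Set.Icc (0:ℝ) (dist u v) ∧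
      ∃ t' ∈ Set.Icc t₁ t₂, t' ≤ t₀ ∧ dist (h p) (γ t') ≤ E} with hA
    have h0A : (0:ℝ) ∈ A := by
      refine ⟨⟨le_rfl, dist_nonneg⟩, t₁, ⟨le_rfl, ht₁₂⟩, ht₁t₀, ?_⟩
      rw [hh.2.2.1]
      simp [hE0, hu]
    have hAbdd : BddAbove A := ⟨dist u v, fun p hp => hp.1.2⟩
    have hDB : D ≤ (3*k'^2+4)*E + (2*k'^3+3*k'^2+4*k'+4+8*δ) := by
      by_cases hvA : dist u v ∈ A
      · -- CASE I
        obtain ⟨hvIcc, t, htmem, htle, htE⟩ := hvA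
        have hGt : G ≤ k' * (t₀ - t) := by
          have := hgap t htmem (dist u v) hvIcc htE
          rw [abs_of_nonpos (by linarith [htmem.2, ht₀t₂] : t - t₀ ≤ 0)] at this
          rw [hG]
          linarith
        have hvv : h (dist u v) = v := hh.2.2.2
        rw [hvv] at htE
        rw [hv] at htE
        have habs : |t₂ - t| ≤ k' * E + k' * k' := by
          have hlow := (hquasi t₂ ht₂mem t (hsubab htmem)).1
          have h6 : |t₂ - t|/k' ≤ E + k' := by linarith
          have h7 := (div_le_iff₀ hk0).mp h6
          nlinarith
        have h1 : t₂ - t ≤ k' * E + k' * k' := le_trans (le_abs_self _) habs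
        have h2 : k' * (t₂ - t₀) ≤ k' * (k' * E + k' * k') - G := by
          have hm := mul_le_mul_of_nonneg_left h1 hk0le
          nlinarith
        rcases hAlt with hA1' | hA2'
        · have h3 : k' * Δ ≤ k' * (t₂ - t₀) := mul_le_mul_of_nonneg_left hA1' hk0le
          rw [hΔ] at h3
          rw [hG] at h2
          nlinarith
        · rw [hG] at h2
          nlinarith
      · -- CASE II
        obtain ⟨p, hpA, hpgt⟩ := exists_lt_of_lt_csSup ⟨0, h0A⟩
          (show sSup A - 1/2 < sSup A by linarith [show (0:ℝ) < 1/2 by norm_num])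
        have hple : p ≤ sSup A := le_csSup hAbdd hpA
        obtain ⟨hpIcc, t, htmem, htle, htE⟩ := hpA
        have hGt : G ≤ k' * (t₀ - t) := by
          have := hgap t htmem p hpIcc htE
          rw [abs_of_nonpos (by linarith [htmem.2, ht₀t₂] : t - t₀ ≤ 0)] at this
          rw [hG]
          linarith
        have hsup0 : 0 ≤ sSup A := le_csSup hAbdd h0A
        set sp : ℝ := min (dist u v) (sSup A + 1/2) with hsp
        have hspIcc : sp ∈ Set.Icc (0:ℝ) (dist u v) :=
          ⟨le_min dist_nonneg (by linarith), min_le_left _ _⟩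
        have hspA : sp ∉ A := by
          intro hmem
          rcases le_total (dist u v) (sSup A + 1/2) with hd' | hd'
          · rw [hsp, min_eq_left hd'] at hmem
            exact hvA hmem
          · have h1 := le_csSup hAbdd hmem
            rw [hsp, min_eq_right hd'] at h1
            linarith
        obtain ⟨t', ht'mem, ht'E⟩ := hP1 sp hspIcc
        have ht'gt : t₀ < t' := by
          by_contra hle
          push_neg at hle
          exact hspA ⟨hspIcc, t', ht'mem, hle, ht'E⟩
        have hGt' : G ≤ k' * (t' - t₀) := by
          have := hgap t' ht'mem sp hspIcc ht'E
          rw [abs_of_nonneg (by linarith : (0:ℝ) ≤ t' - t₀)] at this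
          rw [hG]
          linarith
        have hpp : |p - sp| ≤ 1 := by
          have h1 : p ≤ sp := le_min hpIcc.2 (by linarith)
          have h2 : sp ≤ sSup A + 1/2 := min_le_right _ _
          rw [abs_of_nonpos (by linarith)]
          linarith
        have hdtt' : dist (γ t) (γ t') ≤ 2*E + 1 := by
          have h1 := dist_triangle4 (γ t) (h p) (h sp) (γ t')
          have h2 : dist (h p) (h sp) = |p - sp| := hh.2.1 p hpIcc sp hspIcc
          have h3 : dist (γ t) (h p) = dist (h p) (γ t) := dist_comm _ _
          rw [h2, h3] at h1
          linarith
        have habs : |t - t'| ≤ k' * (2*E+1) + k' * k' := by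
          have hlow := (hquasi t (hsubab htmem) t' (hsubab ht'mem)).1
          have h6 : |t - t'|/k' ≤ (2*E+1) + k' := by linarith
          have h7 := (div_le_iff₀ hk0).mp h6
          nlinarith
        have h2G : 2*G ≤ k' * (k' * (2*E+1) + k' * k') := by
          have h1 : t' - t ≤ |t - t'| := by
            rw [abs_sub_comm]
            exact le_abs_self _
          have h2 : k' * (t' - t) ≤ k' * (k' * (2*E+1) + k' * k') :=
            mul_le_mul_of_nonneg_left (h1.trans habs) hk0le
          nlinarith
        rw [hG] at h2G
        nlinarith
    -- now untangle the log bound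
    have hnR : (n:ℝ) ≤ 4*k'*D + (2*k'^2 + 4*k' + 1) := by
      have h1 : (n:ℝ) < (t₂ - t₁) + 1 := by
        rw [hn]
        exact Nat.ceil_lt_add_one (by linarith)
      have h2 : t₂ - t₁ ≤ 2*Δ := by linarith
      rw [hΔ] at h2
      nlinarith
    have hsqn : Real.sqrt n ≤ A1 * Real.sqrt D + A2 := by
      have h1 : Real.sqrt n ≤ Real.sqrt (4*k'*D + (2*k'^2 + 4*k' + 1)) :=
        Real.sqrt_le_sqrt hnR
      have h2 : Real.sqrt (4*k'*D + (2*k'^2 + 4*k' + 1)) ≤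
          Real.sqrt (4*k'*D) + Real.sqrt (2*k'^2 + 4*k' + 1) :=
        sqrt_add_le' _ _ (by positivity) (by positivity)
      have h3 : Real.sqrt (4*k'*D) = A1 * Real.sqrt D := by
        rw [hA1, ← Real.sqrt_mul (by positivity)]
      rw [hA2]
      linarith
    have hmmR : (mm:ℝ) ≤ 3*Real.sqrt n + 1 := by
      have h1 := log_est n
      have h2 : (mm:ℝ) = (Nat.log 2 n : ℝ) + 1 := by rw [hmm]; push_cast; ring
      linarith
    have hfinal : D ≤ P + Q * Real.sqrt D := by
      have e1 : E ≤ δ*(3*(A1 * Real.sqrt D + A2)+1) + 2*k' := by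
        have m1 : δ * (mm:ℝ) ≤ δ * (3*Real.sqrt n + 1) := mul_le_mul_of_nonneg_left hmmR hδ
        have m2 : δ * (3*Real.sqrt n + 1) ≤ δ*(3*(A1 * Real.sqrt D + A2)+1) :=
          mul_le_mul_of_nonneg_left (by linarith) hδ
        rw [hE]
        linarith
      have e2 : (3*k'^2+4) * E ≤ (3*k'^2+4) * (δ*(3*(A1 * Real.sqrt D + A2)+1) + 2*k') :=
        mul_le_mul_of_nonneg_left e1 (by positivity)
      have e3 : (3*k'^2+4) * (δ*(3*(A1 * Real.sqrt D + A2)+1) + 2*k') + (2*k'^3+3*k'^2+4*k'+4+8*δ)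
          = Q * Real.sqrt D + P := by
        rw [hQ, hP, hc4, hc3]
        ring
      linarith [hDB]
    exact solve_sqrt hP0 hQ0 hD0 hfinal
  -- conclude
  intro t ht
  have h1 : Metric.infDist (γ t) Img < (Q + Real.sqrt P)^2 + 1 := by
    have := hfa t ht
    simp only [hf] at this
    linarith
  obtain ⟨w, hwI, hwlt⟩ := (Metric.infDist_lt_iff hImgne).mp h1
  obtain ⟨s, hs, rfl⟩ := hwI
  exact ⟨s, hs, hwlt.le⟩

set_option maxHeartbeats 1600000 in
theorem stmt12 {X : Type*} [MetricSpace X] (δ k r : ℝ) (hδ : 0 ≤ δ) (hk : 0 ≤ k)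
    (hr : 0 ≤ r) (hgeo : GeodesicSpace X) (hhyp : SlimTriangles X δ)
    (Y₁ Y₂ Z : Set X) (hY₁ : QuasiconvexSet k Y₁) (hY₂ : QuasiconvexSet k Y₂)
    (hZne : Z.Nonempty)
    (hZr : ∀ z ∈ Z, (∃ y ∈ Y₁, dist z y ≤ r) ∧ (∃ y ∈ Y₂, dist z y ≤ r)) :
    CoarselySeparates Z Y₁ Y₂ ↔ CoarseIntersection Z Y₁ Y₂ := by
  constructor
  · -- separation → coarse intersection
    intro hCS
    refine ⟨⟨r, hr, hZr⟩, ?_⟩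
    intro C hC
    obtain ⟨R, hR0, hRp⟩ := hCS (max 1 (2*C)) (le_max_left _ _)
    refine ⟨C + R, by linarith, ?_⟩
    rintro x ⟨y₁, hy₁, hxy₁⟩ ⟨y₂, hy₂, hxy₂⟩
    set k' : ℝ := max 1 (2*C) with hk'def
    have hk'1 : 1 ≤ k' := le_max_left _ _
    have hk'2C : 2*C ≤ k' := le_max_right _ _
    have hk'sq : 2*C ≤ k' * k' := by nlinarith
    obtain ⟨g₁, hg₁⟩ := hgeo y₁ x
    obtain ⟨g₂, hg₂⟩ := hgeo x y₂
    obtain ⟨hd₁0, hg₁iso, hg₁0, hg₁1⟩ := hg₁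
    obtain ⟨hd₂0, hg₂iso, hg₂0, hg₂1⟩ := hg₂
    set d₁ : ℝ := dist y₁ x with hd₁
    set d₂ : ℝ := dist x y₂ with hd₂
    have hd₁C : d₁ ≤ C := by rw [hd₁, dist_comm]; exact hxy₁
    have hd₂C : d₂ ≤ C := hxy₂
    set γ' : ℝ → X := fun t => if t ≤ d₁ then g₁ t else g₂ (t - d₁) with hγ'
    have hγa : γ' 0 = y₁ := by
      rw [hγ']
      simp only [if_pos hd₁0]
      exact hg₁0
    have hγb : γ' (d₁ + d₂) ∈ Y₂ := by
      rcases eq_or_lt_of_le hd₂0 with h0 | h0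
      · have hxy : x = y₂ := by rw [← dist_eq_zero, ← hd₂, ← h0]
        have : d₁ + d₂ ≤ d₁ := by linarith
        rw [hγ']
        simp only [if_pos this]
        have h1 : g₁ (d₁ + d₂) = g₁ d₁ := by rw [show d₁ + d₂ = d₁ by linarith]
        rw [h1, hg₁1, hxy]
        exact hy₂
      · have : ¬ (d₁ + d₂ ≤ d₁) := by linarith
        rw [hγ']
        simp only [if_neg this]
        rw [show d₁ + d₂ - d₁ = d₂ by ring, hg₂1]
        exact hy₂
    have key : ∀ s t : ℝ, 0 ≤ s → s ≤ t → t ≤ d₁ + d₂ → dist (γ' s) (γ' t) ≤ t - s := by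
      intro s t hs hst htb
      by_cases h1 : t ≤ d₁
      · rw [hγ']
        simp only [if_pos (hst.trans h1), if_pos h1]
        rw [hg₁iso s ⟨hs, hst.trans h1⟩ t ⟨hs.trans hst, h1⟩, abs_of_nonpos (by linarith)]
        linarith
      · push_neg at h1
        by_cases h2 : s ≤ d₁
        · rw [hγ']
          simp only [if_pos h2, if_neg (by linarith : ¬ t ≤ d₁)]
          have htri := dist_triangle (g₁ s) (g₁ d₁) (g₂ (t - d₁))
          have e1 : dist (g₁ s) (g₁ d₁) = d₁ - s := by
            rw [hg₁iso s ⟨hs, h2⟩ d₁ ⟨hd₁0, le_rfl⟩, abs_of_nonpos (by linarith)]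
            ring
          have e2 : dist (g₁ d₁) (g₂ (t - d₁)) = t - d₁ := by
            rw [hg₁1, ← hg₂0]
            rw [hg₂iso 0 ⟨le_rfl, hd₂0⟩ (t - d₁) ⟨by linarith, by linarith⟩,
              abs_of_nonpos (by linarith)]
            ring
          rw [e1, e2] at htri
          linarith
        · push_neg at h2
          rw [hγ']
          simp only [if_neg (by linarith : ¬ s ≤ d₁), if_neg (by linarith : ¬ t ≤ d₁)]
          rw [hg₂iso (s - d₁) ⟨by linarith, by linarith⟩ (t - d₁) ⟨by linarith, by linarith⟩,
            abs_of_nonpos (by linarith)]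
          linarith
    have hLip : ∀ s ∈ Set.Icc (0:ℝ) (d₁ + d₂), ∀ t ∈ Set.Icc (0:ℝ) (d₁ + d₂),
        dist (γ' s) (γ' t) ≤ |s - t| := by
      intro s hs t ht
      rcases le_total s t with h | h
      · rw [abs_of_nonpos (by linarith)]
        have := key s t hs.1 h ht.2
        linarith
      · rw [abs_of_nonneg (by linarith), dist_comm]
        have := key t s ht.1 h hs.2
        linarith
    have hquasi : QuasigeodesicOn k' γ' 0 (d₁ + d₂) := by
      intro s hs t ht
      have h1 := hLip s hs t ht
      have habs : |s - t| ≤ 2*C := by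
        rw [abs_le]
        constructor <;> [linarith [hs.1, ht.2, hd₁C, hd₂C]; linarith [ht.1, hs.2, hd₁C, hd₂C]]
      constructor
      · have h2 : |s - t| / k' ≤ k' := by
          rw [div_le_iff₀ (by linarith : (0:ℝ) < k')]
          nlinarith
        linarith [dist_nonneg (x := γ' s) (y := γ' t)]
      · nlinarith [abs_nonneg (s - t), dist_nonneg (x := γ' s) (y := γ' t)]
    obtain ⟨t, htI, z, hz, hdz⟩ := hRp γ' 0 (d₁ + d₂) (by linarith) hquasi
      (by rw [hγa]; exact hy₁) hγb
    have hxt : dist x (γ' t) ≤ C := by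
      by_cases h1 : t ≤ d₁
      · rw [hγ']
        simp only [if_pos h1]
        rw [← hg₁1, dist_comm]
        rw [hg₁iso t ⟨htI.1, h1⟩ d₁ ⟨hd₁0, le_rfl⟩, abs_of_nonpos (by linarith)]
        linarith [htI.1, hd₁C]
      · push_neg at h1
        rw [hγ']
        simp only [if_neg (by linarith : ¬ t ≤ d₁)]
        rw [← hg₂0]
        rw [hg₂iso 0 ⟨le_rfl, hd₂0⟩ (t - d₁) ⟨by linarith, by linarith [htI.2]⟩,
          abs_of_nonpos (by linarith)]
        linarith [htI.2, hd₂C]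
    refine ⟨z, hz, ?_⟩
    calc dist x z ≤ dist x (γ' t) + dist (γ' t) z := dist_triangle _ _ _
      _ ≤ C + R := add_le_add hxt hdz
  · -- coarse intersection → separation
    intro hCI
    intro k' hk'1
    have hk'0 : (0:ℝ) < k' := lt_of_lt_of_le one_pos hk'1
    obtain ⟨Mo, hMo0, hMorse⟩ := morse δ k' hδ hk'1 hgeo hhyp
    set W : ℝ := 2*δ + k + 2*r with hW
    have hW0 : 0 ≤ W := by rw [hW]; positivity
    set V : ℝ := Mo + W with hV
    have hV0 : 0 ≤ V := by rw [hV]; linarith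
    set C : ℝ := V + 2*k' with hC
    have hC0 : 0 ≤ C := by rw [hC]; linarith
    obtain ⟨D₀, hD₀0, hPw⟩ := hCI.2 C hC0
    refine ⟨D₀, hD₀0, ?_⟩
    intro γ a b hab hquasi hY₁a hY₂b
    obtain ⟨z₀, hz₀⟩ := hZne
    obtain ⟨⟨p₁, hp₁, hp₁d⟩, ⟨p₂, hp₂, hp₂d⟩⟩ := hZr z₀ hz₀
    have hp₁₂ : dist p₁ p₂ ≤ 2*r := by
      have := dist_triangle p₁ z₀ p₂
      rw [dist_comm p₁ z₀] at this
      linarith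
    obtain ⟨g, hg⟩ := hgeo (γ a) (γ b)
    set L : ℝ := dist (γ a) (γ b) with hL
    -- every point of the geodesic is close to Y₁ or Y₂
    have claimA : ∀ s ∈ Set.Icc (0:ℝ) L, (∃ q ∈ Y₁, dist (g s) q ≤ W) ∨
        (∃ q ∈ Y₂, dist (g s) q ≤ W) := by
      intro s hs
      obtain ⟨θ₁, hθ₁⟩ := hgeo (γ a) p₂
      obtain ⟨θ₂, hθ₂⟩ := hgeo p₂ (γ b)
      rcases hhyp (γ a) p₂ (γ b) θ₁ θ₂ g 0 (dist (γ a) p₂) 0 (dist p₂ (γ b)) 0 L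
        hθ₁ hθ₂ hg s hs with ⟨s', hs', hd⟩ | ⟨s', hs', hd⟩
      · -- near [γ a, p₂] : inner triangle with p₁
        obtain ⟨θ₃, hθ₃⟩ := hgeo (γ a) p₁
        obtain ⟨θ₄, hθ₄⟩ := hgeo p₁ p₂
        rcases hhyp (γ a) p₁ p₂ θ₃ θ₄ θ₁ 0 (dist (γ a) p₁) 0 (dist p₁ p₂) 0 (dist (γ a) p₂)
          hθ₃ hθ₄ hθ₁ s' hs' with ⟨s'', hs'', hd2⟩ | ⟨s'', hs'', hd2⟩
        · obtain ⟨q, hq, hqd⟩ := hY₁ (γ a) hY₁a p₁ hp₁ θ₃ 0 (dist (γ a) p₁) hθ₃ s'' hs''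
          left
          refine ⟨q, hq, ?_⟩
          have htri := dist_triangle4 (g s) (θ₁ s') (θ₃ s'') q
          rw [hW]
          linarith
        · left
          refine ⟨p₁, hp₁, ?_⟩
          have e1 : dist (θ₄ s'') p₁ = s'' := by
            rw [dist_comm, ← hθ₄.2.2.1]
            rw [hθ₄.2.1 0 ⟨le_rfl, dist_nonneg⟩ s'' hs'', abs_of_nonpos (by linarith [hs''.1])]
            ring
          have htri := dist_triangle4 (g s) (θ₁ s') (θ₄ s'') p₁
          rw [e1] at htri
          rw [hW]
          linarith [hs''.2]
      · -- near [p₂, γ b] : quasiconvexity of Y₂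
        obtain ⟨q, hq, hqd⟩ := hY₂ p₂ hp₂ (γ b) hY₂b θ₂ 0 (dist p₂ (γ b)) hθ₂ s' hs'
        right
        refine ⟨q, hq, ?_⟩
        have htri := dist_triangle (g s) (θ₂ s') q
        rw [hW]
        linarith
    -- every point of the quasigeodesic is close to Y₁ or Y₂
    have dich : ∀ t ∈ Set.Icc a b, (∃ q ∈ Y₁, dist (γ t) q ≤ V) ∨
        (∃ q ∈ Y₂, dist (γ t) q ≤ V) := by
      intro t ht
      obtain ⟨s, hs, hdM⟩ := hMorse γ a b g L hab hquasi hg t ht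
      rcases claimA s hs with ⟨q, hq, hqd⟩ | ⟨q, hq, hqd⟩
      · left
        refine ⟨q, hq, ?_⟩
        have := dist_triangle (γ t) (g s) q
        rw [hV]
        linarith
      · right
        refine ⟨q, hq, ?_⟩
        have := dist_triangle (γ t) (g s) q
        rw [hV]
        linarith
    -- crossing point
    set S : Set ℝ := {t | t ∈ Set.Icc a b ∧ ∃ q ∈ Y₁, dist (γ t) q ≤ V} with hS
    have haS : a ∈ S := ⟨⟨le_rfl, hab⟩, γ a, hY₁a, by simp [hV0]⟩
    have hSbdd : BddAbove S := ⟨b, fun t ht => ht.1.2⟩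
    have hSle : sSup S ≤ b := csSup_le ⟨a, haS⟩ (fun t ht => ht.1.2)
    have hSge : a ≤ sSup S := le_csSup hSbdd haS
    obtain ⟨t, htS, htgt⟩ := exists_lt_of_lt_csSup ⟨a, haS⟩
      (show sSup S - 1/2 < sSup S by linarith [show (0:ℝ) < 1/2 by norm_num])
    have htle : t ≤ sSup S := le_csSup hSbdd htS
    obtain ⟨htIcc, q₁, hq₁, hq₁d⟩ := htS
    have hfound : (∃ q ∈ Y₁, dist (γ t) q ≤ C) ∧ (∃ q ∈ Y₂, dist (γ t) q ≤ C) := by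
      constructor
      · exact ⟨q₁, hq₁, by rw [hC] at *; linarith⟩
      by_cases hcase : sSup S + 1/2 ≤ b
      · have ht'I : (sSup S + 1/2) ∈ Set.Icc a b := ⟨by linarith, hcase⟩
        have hnotS : (sSup S + 1/2) ∉ S := by
          intro hmem
          have := le_csSup hSbdd hmem
          linarith
        have hY2' : ∃ q ∈ Y₂, dist (γ (sSup S + 1/2)) q ≤ V := by
          rcases dich _ ht'I with h1 | h1
          · exact absurd ⟨ht'I, h1⟩ hnotS
          · exact h1
        obtain ⟨q₂, hq₂, hq₂d⟩ := hY2'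
        have hd12 : dist (γ t) (γ (sSup S + 1/2)) ≤ 2*k' := by
          have h2 := (hquasi t htIcc _ ht'I).2
          have habs : |t - (sSup S + 1/2)| ≤ 1 := abs_le.mpr ⟨by linarith, by linarith⟩
          nlinarith
        refine ⟨q₂, hq₂, ?_⟩
        have := dist_triangle (γ t) (γ (sSup S + 1/2)) q₂
        rw [hC]
        linarith
      · push_neg at hcase
        have hd2 : dist (γ t) (γ b) ≤ 2*k' := by
          have h2 := (hquasi t htIcc b ⟨hab, le_rfl⟩).2
          have habs : |t - b| ≤ 1 := abs_le.mpr ⟨by linarith, by linarith [htIcc.2]⟩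
          nlinarith
        refine ⟨γ b, hY₂b, ?_⟩
        rw [hC]
        linarith
    obtain ⟨z, hz, hdz⟩ := hPw (γ t) hfound.1 hfound.2
    exact ⟨t, htIcc, z, hz, hdz⟩
end

section
/- Given δ ≥ 0, k ≥ 0 and a proper function ψ : ℝ≥0 → ℝ≥0, there is a constant R = R(δ, k, ψ) such that: if Y ⊆ X are δ-hyperbolic geodesic spaces with Y in the induced path metric, the inclusion Y → X satisfies the uniform Mitra criterion with uniform CT parameter ψ, and A ⊆ Y is k-quasiconvex in both Y and X, then for all y ∈ Y, d_X(P^X_A(y), P^Y_A(y)) ≤ R. -/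
open Metric Set
open scoped NNReal

section Helpers

variable {Z : Type*} [MetricSpace Z]

lemma clamp_mem {a b : ℝ} (hab : a ≤ b) (t : ℝ) : max a (min b t) ∈ Set.Icc a b :=
  ⟨le_max_left _ _, max_le hab (min_le_left _ _)⟩

lemma clamp_eq {a b t : ℝ} (ht : t ∈ Set.Icc a b) : max a (min b t) = t := by
  rw [min_eq_right ht.2, max_eq_right ht.1]

lemma geod_clamp_lipschitz {γ : ℝ → Z} {a b : ℝ} (hab : a ≤ b) (h : IsGeodesicOn γ a b) :
    LipschitzWith 1 (fun t => γ (max a (min b t))) := by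
  rw [lipschitzWith_iff_dist_le_mul]
  intro s t
  rw [h _ (clamp_mem hab s) _ (clamp_mem hab t), NNReal.coe_one, one_mul, Real.dist_eq]
  calc |max a (min b s) - max a (min b t)|
      = |max (min b s) a - max (min b t) a| := by rw [max_comm a, max_comm a]
    _ ≤ |min b s - min b t| := abs_max_sub_max_le_abs _ _ _
    _ ≤ max |b - b| |s - t| := abs_min_sub_min_le_max _ _ _ _
    _ = |s - t| := by simp

lemma centroid {δ : ℝ} (hδ : 0 ≤ δ) (hs : SlimTriangles Z δ)
    {x y z : Z} {γ₁ γ₂ γ₃ : ℝ → Z} {a₁ b₁ a₂ b₂ a₃ b₃ : ℝ}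
    (h₁ : GeodesicFrom γ₁ a₁ b₁ x y) (h₂ : GeodesicFrom γ₂ a₂ b₂ y z)
    (h₃ : GeodesicFrom γ₃ a₃ b₃ x z) :
    ∃ t ∈ Set.Icc a₃ b₃, (∃ s ∈ Set.Icc a₁ b₁, dist (γ₃ t) (γ₁ s) ≤ δ) ∧
      (∃ s ∈ Set.Icc a₂ b₂, dist (γ₃ t) (γ₂ s) ≤ δ) := by
  obtain ⟨hab₁, hg₁, hx₁, hy₁⟩ := h₁
  obtain ⟨hab₂, hg₂, hy₂, hz₂⟩ := h₂
  obtain ⟨hab₃, hg₃, hx₃, hz₃⟩ := h₃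
  set c₁ : ℝ → Z := fun t => γ₁ (max a₁ (min b₁ t)) with hc₁
  set c₂ : ℝ → Z := fun t => γ₂ (max a₂ (min b₂ t)) with hc₂
  set c₃ : ℝ → Z := fun t => γ₃ (max a₃ (min b₃ t)) with hc₃
  have hc₃eq : ∀ t ∈ Set.Icc a₃ b₃, c₃ t = γ₃ t := fun t ht => by
    simp only [hc₃]; rw [clamp_eq ht]
  set K₁ : Set Z := c₁ '' Set.Icc a₁ b₁ with hK₁
  set K₂ : Set Z := c₂ '' Set.Icc a₂ b₂ with hK₂
  have hK₁c : IsCompact K₁ := isCompact_Icc.image (geod_clamp_lipschitz hab₁ hg₁).continuous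
  have hK₂c : IsCompact K₂ := isCompact_Icc.image (geod_clamp_lipschitz hab₂ hg₂).continuous
  have hK₁n : K₁.Nonempty := ⟨c₁ a₁, ⟨a₁, ⟨le_refl _, hab₁⟩, rfl⟩⟩
  have hK₂n : K₂.Nonempty := ⟨c₂ a₂, ⟨a₂, ⟨le_refl _, hab₂⟩, rfl⟩⟩
  have hmem₁ : ∀ s ∈ Set.Icc a₁ b₁, γ₁ s ∈ K₁ := fun s hs' =>
    ⟨s, hs', by simp only [hc₁]; rw [clamp_eq hs']⟩
  have hmem₂ : ∀ s ∈ Set.Icc a₂ b₂, γ₂ s ∈ K₂ := fun s hs' =>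
    ⟨s, hs', by simp only [hc₂]; rw [clamp_eq hs']⟩
  set T₁ : Set ℝ := {t | infDist (c₃ t) K₁ ≤ δ} with hT₁def
  set T₂ : Set ℝ := {t | infDist (c₃ t) K₂ ≤ δ} with hT₂def
  have hcont : Continuous c₃ := (geod_clamp_lipschitz hab₃ hg₃).continuous
  have hT₁ : IsClosed T₁ := isClosed_le ((continuous_infDist_pt K₁).comp hcont) continuous_const
  have hT₂ : IsClosed T₂ := isClosed_le ((continuous_infDist_pt K₂).comp hcont) continuous_const
  have hcover : Set.Icc a₃ b₃ ⊆ T₁ ∪ T₂ := by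
    intro t ht
    rcases hs x y z γ₁ γ₂ γ₃ a₁ b₁ a₂ b₂ a₃ b₃ ⟨hab₁, hg₁, hx₁, hy₁⟩ ⟨hab₂, hg₂, hy₂, hz₂⟩
      ⟨hab₃, hg₃, hx₃, hz₃⟩ t ht with ⟨s, hs', hd⟩ | ⟨s, hs', hd⟩
    · left
      show infDist (c₃ t) K₁ ≤ δ
      rw [hc₃eq t ht]
      exact le_trans (infDist_le_dist_of_mem (hmem₁ s hs')) hd
    · right
      show infDist (c₃ t) K₂ ≤ δ
      rw [hc₃eq t ht]
      exact le_trans (infDist_le_dist_of_mem (hmem₂ s hs')) hd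
  have hma : a₃ ∈ Set.Icc a₃ b₃ := ⟨le_refl _, hab₃⟩
  have hmb : b₃ ∈ Set.Icc a₃ b₃ := ⟨hab₃, le_refl _⟩
  have hne₁ : (Set.Icc a₃ b₃ ∩ T₁).Nonempty := by
    refine ⟨a₃, hma, ?_⟩
    show infDist (c₃ a₃) K₁ ≤ δ
    rw [hc₃eq a₃ hma]
    have : γ₁ a₁ ∈ K₁ := hmem₁ a₁ ⟨le_refl _, hab₁⟩
    calc infDist (γ₃ a₃) K₁ ≤ dist (γ₃ a₃) (γ₁ a₁) := infDist_le_dist_of_mem this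
      _ = 0 := by rw [hx₃, hx₁, dist_self]
      _ ≤ δ := hδ
  have hne₂ : (Set.Icc a₃ b₃ ∩ T₂).Nonempty := by
    refine ⟨b₃, hmb, ?_⟩
    show infDist (c₃ b₃) K₂ ≤ δ
    rw [hc₃eq b₃ hmb]
    have : γ₂ b₂ ∈ K₂ := hmem₂ b₂ ⟨hab₂, le_refl _⟩
    calc infDist (γ₃ b₃) K₂ ≤ dist (γ₃ b₃) (γ₂ b₂) := infDist_le_dist_of_mem this
      _ = 0 := by rw [hz₃, hz₂, dist_self]
      _ ≤ δ := hδ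
  obtain ⟨t, htI, ht₁, ht₂⟩ :=
    isPreconnected_closed_iff.1 isPreconnected_Icc T₁ T₂ hT₁ hT₂ hcover hne₁ hne₂
  refine ⟨t, htI, ?_, ?_⟩
  · obtain ⟨pp, hppK, hppd⟩ := hK₁c.exists_infDist_eq_dist hK₁n (γ₃ t)
    obtain ⟨s, hsI, rfl⟩ := hppK
    refine ⟨max a₁ (min b₁ s), clamp_mem hab₁ s, ?_⟩
    have : infDist (c₃ t) K₁ ≤ δ := ht₁
    rw [hc₃eq t htI] at this
    calc dist (γ₃ t) (γ₁ (max a₁ (min b₁ s))) = infDist (γ₃ t) K₁ := hppd.symm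
      _ ≤ δ := this
  · obtain ⟨pp, hppK, hppd⟩ := hK₂c.exists_infDist_eq_dist hK₂n (γ₃ t)
    obtain ⟨s, hsI, rfl⟩ := hppK
    refine ⟨max a₂ (min b₂ s), clamp_mem hab₂ s, ?_⟩
    have : infDist (c₃ t) K₂ ≤ δ := ht₂
    rw [hc₃eq t htI] at this
    calc dist (γ₃ t) (γ₂ (max a₂ (min b₂ s))) = infDist (γ₃ t) K₂ := hppd.symm
      _ ≤ δ := this


/-- Projection lemma: a geodesic from `x` to a point `a'` of a quasiconvex set `A`
passes close to the nearest point projection `q` of `x` on `A`, and the distance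
`dist x a'` is almost `dist x q + dist q a'`. -/
lemma proj_lemma {δ k : ℝ} (hδ : 0 ≤ δ) (hk : 0 ≤ k)
    (hgs : GeodesicSpace Z) (hs : SlimTriangles Z δ) {A : Set Z} (hA : QuasiconvexSet k A)
    {x q a' : Z} (hqA : q ∈ A) (hq : ∀ w ∈ A, dist x q ≤ dist x w) (ha' : a' ∈ A)
    {β : ℝ → Z} {aβ bβ : ℝ} (hβ : GeodesicFrom β aβ bβ x a') :
    (∃ t ∈ Set.Icc aβ bβ, dist q (β t) ≤ 3*δ + k) ∧
      dist x q + dist q a' - (4*δ + 2*k) ≤ dist x a' := by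
  obtain ⟨γ₁, hγ₁⟩ := hgs x q
  obtain ⟨γ₂, hγ₂⟩ := hgs q a'
  obtain ⟨t, htI, ⟨s₁, hs₁I, hd₁⟩, ⟨s₂, hs₂I, hd₂⟩⟩ := centroid hδ hs hγ₁ hγ₂ hβ
  obtain ⟨a'', ha''A, ha''⟩ := hA q hqA a' ha' γ₂ 0 (dist q a') hγ₂ s₂ hs₂I
  obtain ⟨habβ, hgβ, hβx, hβa'⟩ := hβ
  obtain ⟨hab₁, hg₁, hγ₁0, hγ₁q⟩ := hγ₁
  -- basic distances
  have hxu : dist x (γ₁ s₁) = s₁ := by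
    have := hg₁ 0 ⟨le_refl _, dist_nonneg⟩ s₁ hs₁I
    rw [hγ₁0] at this
    rw [this, abs_of_nonpos (by linarith [hs₁I.1])]
    ring
  have huq : dist (γ₁ s₁) q = dist x q - s₁ := by
    have := hg₁ s₁ hs₁I (dist x q) ⟨dist_nonneg, le_refl _⟩
    rw [hγ₁q] at this
    rw [this, abs_of_nonpos (by linarith [hs₁I.2])]
    ring
  have hxm : dist x (β t) = t - aβ := by
    have := hgβ aβ ⟨le_refl _, habβ⟩ t htI
    rw [hβx] at this
    rw [this, abs_of_nonpos (by linarith [htI.1])]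
    ring
  have hma' : dist (β t) a' = bβ - t := by
    have := hgβ t htI bβ ⟨habβ, le_refl _⟩
    rw [hβa'] at this
    rw [this, abs_of_nonpos (by linarith [htI.2])]
    ring
  have hxa' : dist x a' = bβ - aβ := by
    have := hgβ aβ ⟨le_refl _, habβ⟩ bβ ⟨habβ, le_refl _⟩
    rw [hβx, hβa'] at this
    rw [this, abs_of_nonpos (by linarith)]
    ring
  -- q is nearest: dist x q ≤ dist x a''
  have h5 : dist x q ≤ dist x (β t) + δ + k := by
    have h5a : dist x a'' ≤ dist x (β t) + dist (β t) (γ₂ s₂) + dist (γ₂ s₂) a'' :=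
      (dist_triangle4 x (β t) (γ₂ s₂) a'')
    have := hq a'' ha''A
    linarith
  have h6 : dist x (β t) ≤ s₁ + δ := by
    have := dist_triangle x (γ₁ s₁) (β t)
    rw [hxu] at this
    rw [dist_comm (γ₁ s₁) (β t)] at this
    linarith
  have huq' : dist (γ₁ s₁) q ≤ 2*δ + k := by
    rw [huq]; linarith
  have hqm : dist q (β t) ≤ 3*δ + k := by
    have := dist_triangle q (γ₁ s₁) (β t)
    rw [dist_comm q (γ₁ s₁)] at this
    rw [dist_comm (γ₁ s₁) (β t)] at this
    linarith
  refine ⟨⟨t, htI, hqm⟩, ?_⟩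
  -- second part
  have hqa'm : dist q a' ≤ dist q (β t) + dist (β t) a' := dist_triangle _ _ _
  have hxm' : dist x q - δ - k ≤ dist x (β t) := by linarith
  have : dist x a' = dist x (β t) + dist (β t) a' := by rw [hxm, hma', hxa']; ring
  linarith

end Helpers

theorem stmt14 (δ k : ℝ) (hδ : 0 ≤ δ) (hk : 0 ≤ k) (ψ : ℝ≥0 → ℝ≥0) (hψ : ProperNN ψ) :
    ∃ R : ℝ≥0,
      ∀ (X Y : Type) [instX : MetricSpace X] [instY : MetricSpace Y] (i : Y → X),
        GeodesicSpace X → GeodesicSpace Y → SlimTriangles X δ → SlimTriangles Y δ →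
        -- the inclusion of `Y` with its induced path metric is 1-Lipschitz
        (∀ y y' : Y, dist (i y) (i y') ≤ dist y y') →
        -- the uniform Mitra criterion with uniform CT parameter ψ
        (∀ (y₀ y y' : Y) (γ : ℝ → Y) (a b : ℝ) (γ' : ℝ → X) (a' b' : ℝ) (M : ℝ≥0),
            GeodesicFrom γ a b y y' → GeodesicFrom γ' a' b' (i y) (i y') →
            (∀ t ∈ Set.Icc a b, M ≤ nndist y₀ (γ t)) →
            ∀ t ∈ Set.Icc a' b', ψ M ≤ nndist (i y₀) (γ' t)) →
        ∀ A : Set Y, QuasiconvexSet k A → QuasiconvexSet k (i '' A) →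
          ∀ (y p : Y) (q : X),
            NearestPointProj A y p → NearestPointProj (i '' A) (i y) q →
            dist (i p) q ≤ (R : ℝ) := by
  obtain ⟨N, hN⟩ := hψ (Real.toNNReal (3*δ + k))
  refine ⟨N + Real.toNNReal (4*δ + 2*k), ?_⟩
  intro X Y instX instY i hgX hgY hsX hsY hlip hMitra A hAY hAX y p q hp hq
  obtain ⟨hpA, hpmin⟩ := hp
  obtain ⟨hqA, hqmin⟩ := hq
  obtain ⟨a, haA, hia⟩ := hqA
  obtain ⟨γ, hγ⟩ := hgY y p
  obtain ⟨γ', hγ'⟩ := hgX (i y) (i p)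
  set D := dist (i p) q with hD
  set M : ℝ≥0 := Real.toNNReal (D - (4*δ + 2*k)) with hM
  have hfar : ∀ t ∈ Set.Icc (0:ℝ) (dist y p), M ≤ nndist a (γ t) := by
    intro t ht
    obtain ⟨hab, hg, hγ0, hγ1⟩ := hγ
    have hyz : dist y (γ t) = t := by
      have := hg 0 ⟨le_refl _, dist_nonneg⟩ t ht
      rw [hγ0] at this; rw [this, abs_of_nonpos (by linarith [ht.1])]; ring
    have hzp : dist (γ t) p = dist y p - t := by
      have := hg t ht (dist y p) ⟨dist_nonneg, le_refl _⟩
      rw [hγ1] at this; rw [this, abs_of_nonpos (by linarith [ht.2])]; ring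
    have hnear : ∀ w ∈ A, dist (γ t) p ≤ dist (γ t) w := by
      intro w hw
      have h1 := hpmin w hw
      have h2 := dist_triangle y (γ t) w
      linarith
    obtain ⟨γ₂, hγ₂⟩ := hgY (γ t) a
    have hproj := (proj_lemma hδ hk hgY hsY hAY hpA hnear haA hγ₂).2
    have hpaD : D ≤ dist p a := by
      rw [hD, ← hia]; exact hlip p a
    rw [← NNReal.coe_le_coe, coe_nndist, hM, Real.coe_toNNReal', dist_comm a (γ t)]
    refine max_le (by linarith [dist_nonneg (x := γ t) (y := p)]) dist_nonneg
  have hmitra := hMitra a y p γ 0 (dist y p) γ' 0 (dist (i y) (i p)) M hγ hγ' hfar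
  have hipA : i p ∈ i '' A := ⟨p, hpA, rfl⟩
  have hqiA : q ∈ i '' A := ⟨a, haA, hia⟩
  obtain ⟨⟨t, htI, hqt⟩, -⟩ := proj_lemma hδ hk hgX hsX hAX hqiA hqmin hipA hγ'
  have h1 : (ψ M : ℝ) ≤ dist (i a) (γ' t) := by
    have := hmitra t htI
    exact_mod_cast this
  rw [hia, dist_comm] at h1
  rw [dist_comm] at hqt
  have h3 : ψ M ≤ Real.toNNReal (3*δ + k) :=
    (Real.le_toNNReal_iff_coe_le (by linarith)).2 (le_trans h1 hqt)
  have h4 : M ≤ N := hN M h3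
  have h5 : D - (4*δ + 2*k) ≤ (N : ℝ) := by
    calc D - (4*δ + 2*k) ≤ (M : ℝ) := by
          rw [hM, Real.coe_toNNReal']; exact le_max_left _ _
      _ ≤ (N : ℝ) := NNReal.coe_le_coe.2 h4
  calc dist (i p) q ≤ (N : ℝ) + (4*δ + 2*k) := by rw [← hD]; linarith
    _ = ((N + Real.toNNReal (4*δ + 2*k) : ℝ≥0) : ℝ) := by
        rw [NNReal.coe_add, Real.coe_toNNReal _ (by linarith)]
end

section
/- Let X be a proper hyperbolic geodesic metric space and {A_n} a sequence of uniformly quasiconvex subsets of X. Then A_n converges to ξ ∈ ∂X if and only if lim_{n→∞} d(x, A_n) = ∞ for some (any) basepoint x ∈ X and there is a sequence z_n ∈ A_n with lim_{n→∞} z_n = ξ in X ∪ ∂X. -/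
open Metric Set
open scoped NNReal

/-- A unit-speed geodesic ray (parametrized on `[0,∞)`). -/
def GeodesicRay {X : Type*} [MetricSpace X] (γ : ℝ → X) : Prop :=
  ∀ s t : ℝ, 0 ≤ s → 0 ≤ t → dist (γ s) (γ t) = |s - t|

/-- Two rays are at finite Hausdorff distance (hence define the same boundary point). -/
def RayHdFinite {X : Type*} [MetricSpace X] (γ γ' : ℝ → X) : Prop :=
  ∃ C : ℝ, (∀ s : ℝ, 0 ≤ s → ∃ t : ℝ, 0 ≤ t ∧ dist (γ s) (γ' t) ≤ C) ∧
           (∀ t : ℝ, 0 ≤ t → ∃ s : ℝ, 0 ≤ s ∧ dist (γ s) (γ' t) ≤ C)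

/-- The sequence of subsets `A n` converges to the boundary point represented by the
geodesic ray `ρ`, with respect to the basepoint `x`. -/
def SetsConvergeTo {X : Type*} [MetricSpace X] (x : X) (A : ℕ → Set X) (ρ : ℝ → X) : Prop :=
  ∀ R : ℝ, 0 < R → ∃ N : ℕ, ∀ n ≥ N, ∀ p ∈ A n, ∀ α : ℝ → X,
    GeodesicRay α → α 0 = p → RayHdFinite α ρ → ∀ t : ℝ, 0 ≤ t → R < dist x (α t)

/-- The sequence of points `z n` converges to the boundary point represented by `ρ`. -/
def PointsConvergeTo {X : Type*} [MetricSpace X] (x : X) (z : ℕ → X) (ρ : ℝ → X) : Prop :=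
  ∀ R : ℝ, 0 < R → ∃ N : ℕ, ∀ n ≥ N, ∀ α : ℝ → X,
    GeodesicRay α → α 0 = z n → RayHdFinite α ρ → ∀ t : ℝ, 0 ≤ t → R < dist x (α t)

open Filter Topology

lemma rayGeodesicFrom {X : Type*} [MetricSpace X] {α : ℝ → X} (hα : GeodesicRay α)
    {T : ℝ} (hT : 0 ≤ T) : GeodesicFrom α 0 T (α 0) (α T) :=
  ⟨hT, fun s hs t ht => hα s t hs.1 ht.1, rfl, rfl⟩

lemma exists_asymptotic_ray {X : Type*} [MetricSpace X] [ProperSpace X]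
    (δ : ℝ) (hδ : 0 ≤ δ) (hgeo : GeodesicSpace X) (hhyp : SlimTriangles X δ)
    (ρ : ℝ → X) (hρ : GeodesicRay ρ) (p : X) :
    ∃ α : ℝ → X, GeodesicRay α ∧ α 0 = p ∧ RayHdFinite α ρ := by
  set d0 := dist p (ρ 0) with hd0
  have hd0n : 0 ≤ d0 := dist_nonneg
  choose γ hγ using fun n : ℕ => hgeo p (ρ (n : ℝ))
  set L : ℕ → ℝ := fun n => dist p (ρ (n : ℝ)) with hLdef
  have hLn : ∀ n, 0 ≤ L n := fun n => dist_nonneg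
  set c : ℕ → ℝ → ℝ := fun n t => max 0 (min t (L n)) with hc
  have hcmem : ∀ n t, c n t ∈ Set.Icc 0 (L n) := fun n t =>
    ⟨le_max_left _ _, max_le (hLn n) (min_le_right _ _)⟩
  set f : ℕ → ℝ → X := fun n t => γ n (c n t) with hf
  have hdist : ∀ n s t, dist (f n s) (f n t) = |c n s - c n t| := fun n s t =>
    (hγ n).2.1 _ (hcmem n s) _ (hcmem n t)
  have hclip : ∀ (n : ℕ) (s t : ℝ), |c n s - c n t| ≤ |s - t| := by
    intro n s t
    calc |c n s - c n t|
        = |max (min s (L n)) 0 - max (min t (L n)) 0| := by simp only [hc]; rw [max_comm 0 (min s (L n)), max_comm 0 (min t (L n))]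
      _ ≤ |min s (L n) - min t (L n)| := abs_max_sub_max_le_abs _ _ _
      _ ≤ max |s - t| |L n - L n| := abs_min_sub_min_le_max _ _ _ _
      _ = |s - t| := by simp
  have hlip : ∀ n s t, dist (f n s) (f n t) ≤ |s - t| := fun n s t =>
    (hdist n s t).le.trans (hclip n s t)
  have hc0 : ∀ n, c n 0 = 0 := by
    intro n; rw [hc]; simp [min_eq_left (hLn n)]
  have hf0 : ∀ n, f n 0 = p := by
    intro n; rw [hf]; simp only [hc0]; exact (hγ n).2.2.1
  have hceq : ∀ n t, 0 ≤ t → t ≤ L n → c n t = t := by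
    intro n t ht hle; rw [hc]; simp [min_eq_left hle, max_eq_right ht]
  have hdp : ∀ n t, dist p (f n t) = c n t := by
    intro n t
    have h0 : (0 : ℝ) ∈ Set.Icc 0 (L n) := ⟨le_refl _, hLn n⟩
    have h := (hγ n).2.1 0 h0 _ (hcmem n t)
    rw [(hγ n).2.2.1] at h
    rw [hf]; rw [h, zero_sub, abs_neg, abs_of_nonneg (hcmem n t).1]
  have hLlb : ∀ n : ℕ, (n : ℝ) - d0 ≤ L n := by
    intro n
    have h1 : dist (ρ 0) (ρ (n : ℝ)) = (n : ℝ) := by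
      rw [hρ 0 n le_rfl (Nat.cast_nonneg n), zero_sub, abs_neg, abs_of_nonneg (Nat.cast_nonneg n)]
    have h2 := dist_triangle (ρ 0) p (ρ (n : ℝ))
    rw [h1, dist_comm (ρ 0) p] at h2
    rw [hLdef]; linarith
  have hshadow : ∀ n t, ∃ u : ℝ, 0 ≤ u ∧ dist (f n t) (ρ u) ≤ δ + d0 := by
    intro n t
    obtain ⟨η, hη⟩ := hgeo p (ρ 0)
    have hρseg : GeodesicFrom ρ 0 (n : ℝ) (ρ 0) (ρ (n : ℝ)) :=
      ⟨Nat.cast_nonneg n, fun s hs u hu => hρ s u hs.1 hu.1, rfl, rfl⟩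
    have htri := hhyp p (ρ 0) (ρ (n : ℝ)) η ρ (γ n) 0 d0 0 (n : ℝ) 0 (L n)
      hη hρseg (hγ n) (c n t) (hcmem n t)
    rcases htri with ⟨s, hs, hd⟩ | ⟨s, hs, hd⟩
    · refine ⟨0, le_refl _, ?_⟩
      have h2 : dist (η s) (ρ 0) ≤ d0 := by
        have h := hη.2.1 s hs d0 ⟨hd0n, le_refl _⟩
        rw [hη.2.2.2] at h
        rw [h]; rw [abs_le]; exact ⟨by linarith [hs.1], by linarith [hs.2, hd0n]⟩
      calc dist (f n t) (ρ 0) ≤ dist (f n t) (η s) + dist (η s) (ρ 0) := dist_triangle _ _ _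
        _ ≤ δ + d0 := add_le_add hd h2
    · exact ⟨s, hs.1, hd.trans (by linarith)⟩
  -- compactness
  haveI : ∀ q : ℚ, CompactSpace (closedBall p (max (q : ℝ) 0) : Set X) := fun q =>
    isCompact_iff_compactSpace.mp (isCompact_closedBall p _)
  have hmem : ∀ (n : ℕ) (q : ℚ), f n (q : ℝ) ∈ closedBall p (max (q : ℝ) 0) := by
    intro n q
    rw [mem_closedBall, dist_comm, hdp]
    exact max_le (le_max_right _ _) (le_trans (min_le_left _ _) (le_max_left _ _))
  set F : ℕ → (∀ q : ℚ, (closedBall p (max (q : ℝ) 0) : Set X)) :=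
    fun n q => ⟨f n (q : ℝ), hmem n q⟩ with hFdef
  obtain ⟨g, -, φ, hφ, hconv⟩ :=
    IsCompact.tendsto_subseq (x := F) isCompact_univ (fun n => Set.mem_univ _)
  have hptQ : ∀ q : ℚ, Filter.Tendsto (fun n => f (φ n) (q : ℝ)) Filter.atTop (𝓝 (g q : X)) := by
    intro q
    have h1 : Filter.Tendsto (fun n => F (φ n) q) Filter.atTop (𝓝 (g q)) :=
      ((continuous_apply q).tendsto g).comp hconv
    exact (continuous_subtype_val.tendsto _).comp h1
  have hcauchy : ∀ t : ℝ, CauchySeq (fun n => f (φ n) t) := by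
    intro t
    rw [Metric.cauchySeq_iff]
    intro ε hε
    obtain ⟨q, hq⟩ := exists_rat_near t (show (0 : ℝ) < ε / 4 by positivity)
    have hcq := (hptQ q).cauchySeq
    rw [Metric.cauchySeq_iff] at hcq
    obtain ⟨N, hN⟩ := hcq (ε / 4) (by positivity)
    refine ⟨N, fun m hm n hn => ?_⟩
    have tri := dist_triangle4 (f (φ m) t) (f (φ m) (q : ℝ)) (f (φ n) (q : ℝ)) (f (φ n) t)
    have h2' : dist (f (φ n) (q : ℝ)) (f (φ n) t) ≤ |t - (q : ℝ)| := by
      rw [abs_sub_comm]; exact hlip (φ n) (q : ℝ) t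
    linarith [hN m hm n hn, hq, hlip (φ m) t (q : ℝ)]
  have hlim : ∀ t : ℝ, ∃ y : X, Filter.Tendsto (fun n => f (φ n) t) Filter.atTop (𝓝 y) :=
    fun t => cauchySeq_tendsto_of_complete (hcauchy t)
  choose α hαlim using hlim
  have hLφ : ∀ s : ℝ, ∀ᶠ n in Filter.atTop, s ≤ L (φ n) := by
    intro s
    filter_upwards [Filter.eventually_ge_atTop (⌈s + d0⌉₊)] with n hn
    have h1 : ((⌈s + d0⌉₊ : ℕ) : ℝ) ≤ ((φ n : ℕ) : ℝ) :=
      Nat.cast_le.2 (le_trans hn hφ.le_apply)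
    have h2 : s + d0 ≤ ((⌈s + d0⌉₊ : ℕ) : ℝ) := Nat.le_ceil _
    linarith [hLlb (φ n)]
  have hray : GeodesicRay α := by
    intro s t hs ht
    have h1 := (hαlim s).dist (hαlim t)
    have h2 : ∀ᶠ n in Filter.atTop,
        dist (f (φ n) s) (f (φ n) t) = |s - t| := by
      filter_upwards [hLφ s, hLφ t] with n ha hb
      rw [hdist, hceq _ _ hs ha, hceq _ _ ht hb]
    exact (tendsto_nhds_unique (Filter.Tendsto.congr' h2 h1) tendsto_const_nhds).symm ▸ rfl
  have hα0 : α 0 = p := by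
    have h2 : ∀ᶠ n in Filter.atTop, f (φ n) 0 = p := Filter.Eventually.of_forall fun n => hf0 _
    exact tendsto_nhds_unique (Filter.Tendsto.congr' h2 (hαlim 0)) tendsto_const_nhds
  have hnear : ∀ t : ℝ, 0 ≤ t → ∃ u, 0 ≤ u ∧ dist (α t) (ρ u) ≤ δ + d0 + 1 := by
    intro t ht
    obtain ⟨N, hN⟩ := Metric.tendsto_atTop.1 (hαlim t) 1 one_pos
    obtain ⟨u, hu, hdu⟩ := hshadow (φ N) t
    refine ⟨u, hu, ?_⟩
    have h1 := hN N le_rfl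
    calc dist (α t) (ρ u) ≤ dist (α t) (f (φ N) t) + dist (f (φ N) t) (ρ u) := dist_triangle _ _ _
      _ ≤ δ + d0 + 1 := by rw [dist_comm (α t)]; linarith
  have hmain : ∀ t : ℝ, 0 ≤ t → dist (α t) (ρ t) ≤ 2 * (δ + d0 + 1) + d0 := by
    intro t ht
    obtain ⟨u, hu, hdu⟩ := hnear t ht
    have hαt : dist (α 0) (α t) = t := by
      rw [hray 0 t le_rfl ht, zero_sub, abs_neg, abs_of_nonneg ht]
    have hρu : dist (ρ 0) (ρ u) = u := by
      rw [hρ 0 u le_rfl hu, zero_sub, abs_neg, abs_of_nonneg hu]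
    have hρut : dist (ρ u) (ρ t) = |u - t| := hρ u t hu ht
    have tri1 := dist_triangle (ρ 0) (α t) (ρ u)
    have tri2 := dist_triangle (ρ 0) (ρ u) (α t)
    have tri3 := dist_triangle (ρ 0) (α 0) (α t)
    have tri4 := dist_triangle (α 0) (ρ 0) (α t)
    have hc1 : dist (ρ 0) (α 0) = d0 := by rw [hα0, dist_comm]
    have hc2 : dist (α 0) (ρ 0) = d0 := by rw [hα0]
    have hc3 : dist (ρ u) (α t) = dist (α t) (ρ u) := dist_comm _ _
    have habs : |u - t| ≤ d0 + (δ + d0 + 1) := by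
      rw [abs_le]
      constructor <;> nlinarith [hdu, hρu, hαt, tri1, tri2, tri3, tri4, hc1, hc2, hc3]
    calc dist (α t) (ρ t) ≤ dist (α t) (ρ u) + dist (ρ u) (ρ t) := dist_triangle _ _ _
      _ ≤ 2 * (δ + d0 + 1) + d0 := by rw [hρut]; linarith
  exact ⟨α, hray, hα0, 2 * (δ + d0 + 1) + d0,
    fun s hs => ⟨s, hs, hmain s hs⟩, fun t' ht' => ⟨t', ht', hmain t' ht'⟩⟩

lemma fellow_travel {X : Type*} [MetricSpace X]
    (δ : ℝ) (hδ : 0 ≤ δ) (hgeo : GeodesicSpace X) (hhyp : SlimTriangles X δ)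
    (α β : ℝ → X) (hα : GeodesicRay α) (hβ : GeodesicRay β) (C : ℝ)
    (hclose : ∀ s, 0 ≤ s → ∃ u, 0 ≤ u ∧ dist (α s) (β u) ≤ C)
    (γ : ℝ → X) (a b : ℝ) (hγ : GeodesicFrom γ a b (α 0) (β 0))
    (t : ℝ) (ht : 0 ≤ t) :
    (∃ r ∈ Set.Icc a b, dist (α t) (γ r) ≤ 2 * δ) ∨
    (∃ s, 0 ≤ s ∧ dist (α t) (β s) ≤ 2 * δ) := by
  have hC : 0 ≤ C := by
    obtain ⟨u, -, h⟩ := hclose 0 le_rfl; exact dist_nonneg.trans h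
  set T : ℝ := t + C + 2 * δ + 1 with hTdef
  have hT0 : 0 ≤ T := by positivity
  have htT : t ≤ T := by rw [hTdef]; linarith
  obtain ⟨T', hT', hTd⟩ := hclose T hT0
  obtain ⟨τ, hτ⟩ := hgeo (α 0) (β T')
  obtain ⟨σ, hσ⟩ := hgeo (β T') (α T)
  have hαseg : GeodesicFrom α 0 T (α 0) (α T) := rayGeodesicFrom hα hT0
  have tri1 := hhyp (α 0) (β T') (α T) τ σ α 0 (dist (α 0) (β T')) 0 (dist (β T') (α T)) 0 T
    hτ hσ hαseg t ⟨ht, htT⟩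
  rcases tri1 with ⟨s, hs, hds⟩ | ⟨s, hs, hds⟩
  · have hβseg : GeodesicFrom β 0 T' (β 0) (β T') := rayGeodesicFrom hβ hT'
    have tri2 := hhyp (α 0) (β 0) (β T') γ β τ a b 0 T' 0 (dist (α 0) (β T'))
      hγ hβseg hτ s hs
    rcases tri2 with ⟨r, hr, hdr⟩ | ⟨u, hu, hdu⟩
    · left
      refine ⟨r, hr, ?_⟩
      calc dist (α t) (γ r) ≤ dist (α t) (τ s) + dist (τ s) (γ r) := dist_triangle _ _ _
        _ ≤ 2 * δ := by linarith
    · right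
      refine ⟨u, hu.1, ?_⟩
      calc dist (α t) (β u) ≤ dist (α t) (τ s) + dist (τ s) (β u) := dist_triangle _ _ _
        _ ≤ 2 * δ := by linarith
  · exfalso
    set L2 := dist (β T') (α T) with hL2
    have h1 : dist (σ s) (α T) ≤ L2 := by
      have h := hσ.2.1 s hs L2 ⟨dist_nonneg, le_rfl⟩
      rw [hσ.2.2.2] at h
      rw [h, abs_le]
      exact ⟨by linarith [hs.1], by linarith [hs.2, dist_nonneg (x := β T') (y := α T)]⟩
    have h2 : dist (α t) (α T) = T - t := by
      rw [hα t T ht hT0, abs_of_nonpos (by linarith), neg_sub]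
    have h3 : L2 ≤ C := by rw [hL2, dist_comm]; exact hTd
    have tri := dist_triangle (α t) (σ s) (α T)
    rw [h2] at tri
    rw [hTdef] at tri
    linarith


theorem stmt15 {X : Type*} [MetricSpace X] [ProperSpace X] (δ k : ℝ)
    (hδ : 0 ≤ δ) (hk : 0 ≤ k) (hgeo : GeodesicSpace X) (hhyp : SlimTriangles X δ)
    (A : ℕ → Set X) (hA : ∀ n, QuasiconvexSet k (A n)) (hAne : ∀ n, (A n).Nonempty)
    (x : X) (ρ : ℝ → X) (hρ : GeodesicRay ρ) :
    SetsConvergeTo x A ρ ↔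
      (Filter.Tendsto (fun n => Metric.infDist x (A n)) Filter.atTop Filter.atTop ∧
        ∃ z : ℕ → X, (∀ n, z n ∈ A n) ∧ PointsConvergeTo x z ρ) := by
  constructor
  · intro hconv
    constructor
    · rw [Filter.tendsto_atTop]
      intro M
      obtain ⟨N, hN⟩ := hconv (max M 1) (lt_of_lt_of_le one_pos (le_max_right _ _))
      filter_upwards [Filter.eventually_ge_atTop N] with n hn
      by_contra hlt
      push_neg at hlt
      obtain ⟨y, hy, hylt⟩ := (infDist_lt_iff (hAne n)).1 (lt_of_lt_of_le hlt (le_max_left M 1))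
      obtain ⟨α, h1, h2, h3⟩ := exists_asymptotic_ray δ hδ hgeo hhyp ρ hρ y
      have h4 := hN n hn y hy α h1 h2 h3 0 le_rfl
      rw [h2] at h4
      exact absurd h4 (not_lt.2 hylt.le)
    · refine ⟨fun n => (hAne n).some, fun n => (hAne n).some_mem, ?_⟩
      intro R hR
      obtain ⟨N, hN⟩ := hconv R hR
      exact ⟨N, fun n hn => hN n hn _ (hAne n).some_mem⟩
  · rintro ⟨htend, z, hz, hpts⟩
    intro R hR
    obtain ⟨N1, hN1⟩ := hpts (R + 2 * δ) (by linarith)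
    obtain ⟨N2, hN2⟩ := Filter.eventually_atTop.1
      (Filter.tendsto_atTop.1 htend (R + 2 * δ + k + 1))
    refine ⟨max N1 N2, fun n hn p hp α hαray hα0 hαρ t ht => ?_⟩
    have hn1 : N1 ≤ n := le_trans (le_max_left _ _) hn
    have hn2 : N2 ≤ n := le_trans (le_max_right _ _) hn
    obtain ⟨β, hβray, hβ0, hβρ⟩ := exists_asymptotic_ray δ hδ hgeo hhyp ρ hρ (z n)
    obtain ⟨Cα, hCα1, hCα2⟩ := hαρ
    obtain ⟨Cβ, hCβ1, hCβ2⟩ := hβρ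
    have hclose : ∀ s, 0 ≤ s → ∃ u, 0 ≤ u ∧ dist (α s) (β u) ≤ Cα + Cβ := by
      intro s hs
      obtain ⟨w, hw, hw2⟩ := hCα1 s hs
      obtain ⟨u, hu, hu2⟩ := hCβ2 w hw
      refine ⟨u, hu, ?_⟩
      calc dist (α s) (β u) ≤ dist (α s) (ρ w) + dist (ρ w) (β u) := dist_triangle _ _ _
        _ ≤ Cα + Cβ := by rw [dist_comm (ρ w)]; exact add_le_add hw2 hu2
    obtain ⟨γ, hγ⟩ := hgeo (α 0) (β 0)
    rcases fellow_travel δ hδ hgeo hhyp α β hαray hβray _ hclose γ 0 _ hγ t ht with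
      ⟨r, hr, hdr⟩ | ⟨s, hs, hds⟩
    · have hγ' := hγ
      rw [hα0, hβ0] at hγ' hr
      obtain ⟨q, hq, hdq⟩ := hA n p hp (z n) (hz n) γ 0 _ hγ' r hr
      have hinf : infDist x (A n) ≤ dist x q := infDist_le_dist_of_mem hq
      have hbig := hN2 n hn2
      have tri := dist_triangle4 x (α t) (γ r) q
      linarith
    · have hfar := hN1 n hn1 β hβray hβ0 ⟨Cβ, hCβ1, hCβ2⟩ s hs
      have tri := dist_triangle x (α t) (β s)
      linarith
end

section
/- Let X be a proper hyperbolic geodesic metric space and {A_n} a sequence of uniformly quasiconvex subsets of X such that the collection {A_n : n ∈ ℕ} is locally finite (every finite-radius ball meets only finitely many A_n). Then some subsequence {A_{n_k}} converges to a point of ∂X. -/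
open Metric Set
open scoped NNReal

noncomputable def gp {X : Type*} [MetricSpace X] (x a b : X) : ℝ :=
  (dist x a + dist x b - dist a b) / 2

section Lemmas
variable {X : Type*} [MetricSpace X]

lemma IsGeodesicOn.lipschitzOn {γ : ℝ → X} {a b : ℝ} (h : IsGeodesicOn γ a b) :
    LipschitzOnWith 1 γ (Set.Icc a b) := by
  rw [lipschitzOnWith_iff_dist_le_mul]
  intro s hs t ht
  rw [h s hs t ht, Real.dist_eq]
  simp

/-- On any geodesic there is a point within `2δ` of the Gromov product from `x`. -/
lemma exists_close_point {δ : ℝ} (hδ : 0 ≤ δ) (hgeo : GeodesicSpace X)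
    (hhyp : SlimTriangles X δ) (x a c : X) {γ₃ : ℝ → X} {a₃ b₃ : ℝ}
    (h₃ : GeodesicFrom γ₃ a₃ b₃ a c) :
    ∃ T ∈ Set.Icc a₃ b₃, dist x (γ₃ T) ≤ gp x a c + 2 * δ := by
  obtain ⟨γ₁, h₁⟩ := hgeo a x
  obtain ⟨γ₂, h₂⟩ := hgeo x c
  have slim := hhyp a x c γ₁ γ₂ γ₃ 0 (dist a x) 0 (dist x c) a₃ b₃ h₁ h₂ h₃
  set K₁ : Set X := γ₁ '' Set.Icc 0 (dist a x) with hK₁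
  set K₂ : Set X := γ₂ '' Set.Icc 0 (dist x c) with hK₂
  have hK₁c : IsCompact K₁ :=
    (isCompact_Icc).image_of_continuousOn h₁.2.1.lipschitzOn.continuousOn
  have hK₂c : IsCompact K₂ :=
    (isCompact_Icc).image_of_continuousOn h₂.2.1.lipschitzOn.continuousOn
  have hK₁ne : K₁.Nonempty := ⟨γ₁ 0, Set.mem_image_of_mem _ (by constructor <;> simp [dist_nonneg])⟩
  have hK₂ne : K₂.Nonempty := ⟨γ₂ 0, Set.mem_image_of_mem _ (by constructor <;> simp [dist_nonneg])⟩
  -- characterization of slimness via infDist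
  have hiff₁ : ∀ t, (∃ s ∈ Set.Icc 0 (dist a x), dist (γ₃ t) (γ₁ s) ≤ δ) ↔
      infDist (γ₃ t) K₁ ≤ δ := by
    intro t
    constructor
    · rintro ⟨s, hs, hd⟩
      exact (infDist_le_dist_of_mem (Set.mem_image_of_mem _ hs)).trans hd
    · intro hle
      obtain ⟨y, hy, hyd⟩ := hK₁c.exists_infDist_eq_dist hK₁ne (γ₃ t)
      obtain ⟨s, hs, rfl⟩ := hy
      exact ⟨s, hs, by rw [← hyd]; exact hle⟩
  have hiff₂ : ∀ t, (∃ s ∈ Set.Icc 0 (dist x c), dist (γ₃ t) (γ₂ s) ≤ δ) ↔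
      infDist (γ₃ t) K₂ ≤ δ := by
    intro t
    constructor
    · rintro ⟨s, hs, hd⟩
      exact (infDist_le_dist_of_mem (Set.mem_image_of_mem _ hs)).trans hd
    · intro hle
      obtain ⟨y, hy, hyd⟩ := hK₂c.exists_infDist_eq_dist hK₂ne (γ₃ t)
      obtain ⟨s, hs, rfl⟩ := hy
      exact ⟨s, hs, by rw [← hyd]; exact hle⟩
  set S : Set ℝ := {t | t ∈ Set.Icc a₃ b₃ ∧ infDist (γ₃ t) K₁ ≤ δ} with hS
  have hab : a₃ ≤ b₃ := h₃.1
  have ha₃S : a₃ ∈ S := by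
    refine ⟨⟨le_refl _, hab⟩, ?_⟩
    have : γ₃ a₃ = γ₁ 0 := by rw [h₃.2.2.1, h₁.2.2.1]
    have h0 : γ₁ 0 ∈ K₁ := Set.mem_image_of_mem _ (by constructor <;> simp [dist_nonneg])
    calc infDist (γ₃ a₃) K₁ ≤ dist (γ₃ a₃) (γ₁ 0) := infDist_le_dist_of_mem h0
    _ ≤ δ := by rw [this, dist_self]; exact hδ
  have hSne : S.Nonempty := ⟨a₃, ha₃S⟩
  have hSbdd : BddAbove S := ⟨b₃, fun t ht => ht.1.2⟩
  set T := sSup S with hT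
  have hTmem : T ∈ Set.Icc a₃ b₃ := ⟨le_csSup hSbdd ha₃S, csSup_le hSne (fun t ht => ht.1.2)⟩
  -- T is close to side 1
  have hT1 : infDist (γ₃ T) K₁ ≤ δ := by
    refine le_of_forall_pos_le_add (fun ε hε => ?_)
    obtain ⟨t, htS, htlt⟩ := exists_lt_of_lt_csSup hSne (by linarith : T - ε < T)
    have htT : t ≤ T := le_csSup hSbdd htS
    have hd : dist (γ₃ T) (γ₃ t) ≤ ε := by
      rw [h₃.2.1 T hTmem t htS.1, abs_of_nonneg (by linarith)]; linarith
    calc infDist (γ₃ T) K₁ ≤ infDist (γ₃ t) K₁ + dist (γ₃ T) (γ₃ t) :=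
          infDist_le_infDist_add_dist
    _ ≤ δ + ε := add_le_add htS.2 hd
  -- T is close to side 2
  have hT2 : infDist (γ₃ T) K₂ ≤ δ := by
    rcases eq_or_lt_of_le hTmem.2 with heq | hlt
    · have : γ₃ T = γ₂ (dist x c) := by rw [heq, h₃.2.2.2, h₂.2.2.2]
      have h0 : γ₂ (dist x c) ∈ K₂ :=
        Set.mem_image_of_mem _ (by constructor <;> simp [dist_nonneg])
      calc infDist (γ₃ T) K₂ ≤ dist (γ₃ T) (γ₂ (dist x c)) := infDist_le_dist_of_mem h0
      _ ≤ δ := by rw [this, dist_self]; exact hδ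
    · refine le_of_forall_pos_le_add (fun ε hε => ?_)
      set t := min (T + ε) b₃ with htdef
      have htmem : t ∈ Set.Icc a₃ b₃ := ⟨le_min (by linarith [hTmem.1]) hab, min_le_right _ _⟩
      have htgt : T < t := lt_min (by linarith) hlt
      have htnS : t ∉ S := fun h => absurd (le_csSup hSbdd h) (not_le.mpr htgt)
      have ht2 : infDist (γ₃ t) K₂ ≤ δ := by
        rcases slim t htmem with hcase | hcase
        · exact absurd ⟨htmem, (hiff₁ t).mp hcase⟩ htnS
        · exact (hiff₂ t).mp hcase
      have hd : dist (γ₃ T) (γ₃ t) ≤ ε := by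
        rw [h₃.2.1 T hTmem t htmem, abs_of_nonpos (by linarith)]
        have : t ≤ T + ε := min_le_left _ _
        linarith
      calc infDist (γ₃ T) K₂ ≤ infDist (γ₃ t) K₂ + dist (γ₃ T) (γ₃ t) :=
            infDist_le_infDist_add_dist
      _ ≤ δ + ε := add_le_add ht2 hd
  obtain ⟨s₁, hs₁, hu⟩ := (hiff₁ T).mpr hT1
  obtain ⟨s₂, hs₂, hv⟩ := (hiff₂ T).mpr hT2
  refine ⟨T, hTmem, ?_⟩
  -- arithmetic
  have e1 : dist (γ₁ 0) (γ₁ s₁) = s₁ := by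
    rw [h₁.2.1 0 (by constructor <;> simp [dist_nonneg]) s₁ hs₁, abs_of_nonpos (by linarith [hs₁.1])]
    ring
  have e2 : dist (γ₁ s₁) (γ₁ (dist a x)) = dist a x - s₁ := by
    rw [h₁.2.1 s₁ hs₁ (dist a x) (by constructor <;> simp [dist_nonneg]),
      abs_of_nonpos (by linarith [hs₁.2])]
    ring
  have e3 : dist (γ₂ 0) (γ₂ s₂) = s₂ := by
    rw [h₂.2.1 0 (by constructor <;> simp [dist_nonneg]) s₂ hs₂, abs_of_nonpos (by linarith [hs₂.1])]
    ring
  have e4 : dist (γ₂ s₂) (γ₂ (dist x c)) = dist x c - s₂ := by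
    rw [h₂.2.1 s₂ hs₂ (dist x c) (by constructor <;> simp [dist_nonneg]),
      abs_of_nonpos (by linarith [hs₂.2])]
    ring
  have e5 : dist (γ₃ a₃) (γ₃ T) = T - a₃ := by
    rw [h₃.2.1 a₃ ⟨le_refl _, hab⟩ T hTmem, abs_of_nonpos (by linarith [hTmem.1])]; ring
  have e6 : dist (γ₃ T) (γ₃ b₃) = b₃ - T := by
    rw [h₃.2.1 T hTmem b₃ ⟨hab, le_refl _⟩, abs_of_nonpos (by linarith [hTmem.2])]; ring
  rw [h₁.2.2.1] at e1; rw [h₁.2.2.2] at e2; rw [h₂.2.2.1] at e3; rw [h₂.2.2.2] at e4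
  rw [h₃.2.2.1] at e5; rw [h₃.2.2.2] at e6
  have t1 : dist a (γ₃ T) ≤ dist a (γ₁ s₁) + dist (γ₁ s₁) (γ₃ T) := dist_triangle _ _ _
  have t2 : dist (γ₃ T) c ≤ dist (γ₃ T) (γ₂ s₂) + dist (γ₂ s₂) c := dist_triangle _ _ _
  have t3 : dist x (γ₃ T) ≤ dist x (γ₁ s₁) + dist (γ₁ s₁) (γ₃ T) := dist_triangle _ _ _
  have t4 : dist x (γ₃ T) ≤ dist x (γ₂ s₂) + dist (γ₂ s₂) (γ₃ T) := dist_triangle _ _ _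
  have c1 : dist (γ₁ s₁) (γ₃ T) = dist (γ₃ T) (γ₁ s₁) := dist_comm _ _
  have c2 : dist (γ₂ s₂) (γ₃ T) = dist (γ₃ T) (γ₂ s₂) := dist_comm _ _
  have c3 : dist x (γ₁ s₁) = dist (γ₁ s₁) x := dist_comm _ _
  have c4 : dist x a = dist a x := dist_comm _ _
  have c5 : dist a (γ₃ T) = dist (γ₃ T) a := dist_comm _ _
  have c6 : dist x (γ₂ s₂) = dist (γ₂ s₂) x := dist_comm _ _
  have hac : dist a c = dist (γ₃ a₃) (γ₃ b₃) := by rw [h₃.2.2.1, h₃.2.2.2]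
  have e7 : dist a c = b₃ - a₃ := by
    rw [hac, h₃.2.1 a₃ ⟨le_refl _, hab⟩ b₃ ⟨hab, le_refl _⟩, abs_of_nonpos (by linarith)]; ring
  unfold gp
  -- dist a u = s₁ (e1 with comm), dist u x = dax - s₁ (e2), dist x v = s₂ (e3), dist v c = dxc - s₂ (e4)
  linarith [hu, hv, t1, t2, t3, t4]

/-- Any point on a geodesic from `p` to `q` is at distance at least `gp x p q` from `x`. -/
lemma gp_le_dist_on_geod (x : X) {γ : ℝ → X} {a b : ℝ} {p q : X}
    (h : GeodesicFrom γ a b p q) {t : ℝ} (ht : t ∈ Set.Icc a b) :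
    gp x p q ≤ dist x (γ t) := by
  have hab := h.1
  have e1 : dist p (γ t) = t - a := by
    rw [← h.2.2.1, h.2.1 a ⟨le_refl _, hab⟩ t ht, abs_of_nonpos (by linarith [ht.1])]; ring
  have e2 : dist (γ t) q = b - t := by
    rw [← h.2.2.2, h.2.1 t ht b ⟨hab, le_refl _⟩, abs_of_nonpos (by linarith [ht.2])]; ring
  have e3 : dist p q = b - a := by
    rw [← h.2.2.1, ← h.2.2.2, h.2.1 a ⟨le_refl _, hab⟩ b ⟨hab, le_refl _⟩,
      abs_of_nonpos (by linarith)]; ring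
  have t1 : dist x p ≤ dist x (γ t) + dist (γ t) p := dist_triangle _ _ _
  have t2 : dist x q ≤ dist x (γ t) + dist (γ t) q := dist_triangle _ _ _
  have c1 : dist (γ t) p = dist p (γ t) := dist_comm _ _
  unfold gp
  linarith

/-- The four-point hyperbolicity inequality obtained from slim triangles. -/
lemma gp_min_le {δ : ℝ} (hδ : 0 ≤ δ) (hgeo : GeodesicSpace X) (hhyp : SlimTriangles X δ)
    (x a b c : X) : min (gp x a b) (gp x b c) - 3 * δ ≤ gp x a c := by
  obtain ⟨γ₃, h₃⟩ := hgeo a c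
  obtain ⟨T, hT, hTd⟩ := exists_close_point hδ hgeo hhyp x a c h₃
  obtain ⟨γ₁, h₁⟩ := hgeo a b
  obtain ⟨γ₂, h₂⟩ := hgeo b c
  rcases hhyp a b c γ₁ γ₂ γ₃ 0 (dist a b) 0 (dist b c) 0 (dist a c) h₁ h₂ h₃ T hT with
    ⟨s, hs, hd⟩ | ⟨s, hs, hd⟩
  · have h1 : gp x a b ≤ dist x (γ₁ s) := gp_le_dist_on_geod x h₁ hs
    have h2 : dist x (γ₁ s) ≤ dist x (γ₃ T) + dist (γ₃ T) (γ₁ s) := dist_triangle _ _ _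
    have := min_le_left (gp x a b) (gp x b c)
    linarith
  · have h1 : gp x b c ≤ dist x (γ₂ s) := gp_le_dist_on_geod x h₂ hs
    have h2 : dist x (γ₂ s) ≤ dist x (γ₃ T) + dist (γ₃ T) (γ₂ s) := dist_triangle _ _ _
    have := min_le_right (gp x a b) (gp x b c)
    linarith

/-- For two points in a `k`-quasiconvex set, the Gromov product from `x` is at least
`infDist x A - k - 2δ`. -/
lemma infDist_le_gp {δ k : ℝ} (hδ : 0 ≤ δ) (hgeo : GeodesicSpace X) (hhyp : SlimTriangles X δ)
    {A : Set X} (hA : QuasiconvexSet k A) {p q : X} (hp : p ∈ A) (hq : q ∈ A) (x : X) :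
    infDist x A - k - 2 * δ ≤ gp x p q := by
  obtain ⟨γ, hγ⟩ := hgeo p q
  obtain ⟨T, hT, hTd⟩ := exists_close_point hδ hgeo hhyp x p q hγ
  obtain ⟨w, hw, hwd⟩ := hA p hp q hq γ 0 (dist p q) hγ T hT
  have h1 : infDist x A ≤ dist x w := infDist_le_dist_of_mem hw
  have h2 : dist x w ≤ dist x (γ T) + dist (γ T) w := dist_triangle _ _ _
  linarith

end Lemmas

theorem stmt16 {X : Type*} [MetricSpace X] [ProperSpace X] (δ k : ℝ)
    (hδ : 0 ≤ δ) (hk : 0 ≤ k) (hgeo : GeodesicSpace X) (hhyp : SlimTriangles X δ)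
    (A : ℕ → Set X) (hA : ∀ n, QuasiconvexSet k (A n)) (hAne : ∀ n, (A n).Nonempty)
    (hlf : ∀ (c : X) (r : ℝ), {n : ℕ | (A n ∩ Metric.closedBall c r).Nonempty}.Finite)
    (x : X) :
    ∃ φ : ℕ → ℕ, StrictMono φ ∧ ∃ ρ : ℝ → X, GeodesicRay ρ ∧
      SetsConvergeTo x (fun j => A (φ j)) ρ := by
  classical
  -- distances to the sets tend to infinity
  have hD : ∀ r : ℝ, ∃ N : ℕ, ∀ n, N ≤ n → r < infDist x (A n) := by
    intro r
    obtain ⟨b, hb⟩ := (hlf x (r + 1)).bddAbove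
    refine ⟨b + 1, fun n hn => ?_⟩
    by_contra h
    push_neg at h
    have h1 : infDist x (A n) < r + 1 := lt_of_le_of_lt h (lt_add_one r)
    obtain ⟨y, hy, hyd⟩ := (infDist_lt_iff (hAne n)).mp h1
    have hmem : n ∈ {n : ℕ | (A n ∩ Metric.closedBall x (r + 1)).Nonempty} :=
      ⟨y, hy, by rw [mem_closedBall, dist_comm]; exact hyd.le⟩
    exact absurd (hb hmem) (by omega)
  -- choose near-nearest points
  have hpex : ∀ n, ∃ y ∈ A n, dist x y < infDist x (A n) + 1 := fun n =>
    (infDist_lt_iff (hAne n)).mp (lt_add_one _)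
  choose p hp1 hp2 using hpex
  -- geodesics from x to p n
  have hγex : ∀ n, ∃ γ : ℝ → X, GeodesicFrom γ 0 (dist x (p n)) x (p n) := fun n => hgeo x (p n)
  choose γ hγ using hγex
  set L : ℕ → ℝ := fun n => dist x (p n) with hLdef
  have hL0 : ∀ n, 0 ≤ L n := fun n => dist_nonneg
  -- extended 1-Lipschitz curves
  set g : ℕ → ℝ → X := fun n t => γ n (max 0 (min t (L n))) with hg
  have hclamp : ∀ n t, max 0 (min t (L n)) ∈ Set.Icc 0 (L n) := fun n t =>
    ⟨le_max_left _ _, max_le (hL0 n) (min_le_right _ _)⟩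
  have hgeq : ∀ n, ∀ t ∈ Set.Icc 0 (L n), g n t = γ n t := by
    intro n t ht
    simp only [hg]
    rw [min_eq_left ht.2, max_eq_right ht.1]
  have hgdist : ∀ n s t, dist (g n s) (g n t) ≤ |s - t| := by
    intro n s t
    simp only [hg]
    rw [(hγ n).2.1 _ (hclamp n s) _ (hclamp n t)]
    calc |max 0 (min s (L n)) - max 0 (min t (L n))| ≤ |min s (L n) - min t (L n)| := by
          simpa [max_comm] using abs_max_sub_max_le_abs (min s (L n)) (min t (L n)) 0
    _ ≤ |s - t| := by
          simpa using abs_min_sub_min_le_max s (L n) t (L n)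
  have hg0 : ∀ n, g n 0 = x := by
    intro n
    simp only [hg]
    rw [min_eq_left (hL0 n), max_self, (hγ n).2.2.1]
  have hgL : ∀ n, g n (L n) = p n := by
    intro n
    rw [hgeq n (L n) ⟨hL0 n, le_refl _⟩, (hγ n).2.2.2]
  have hgballd : ∀ n t, dist x (g n t) = max 0 (min t (L n)) := by
    intro n t
    simp only [hg]
    rw [← (hγ n).2.2.1, (hγ n).2.1 0 ⟨le_refl 0, hL0 n⟩ _ (hclamp n t),
      abs_of_nonpos (by linarith [le_max_left 0 (min t (L n))])]
    ring
  -- compactness extraction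
  set K : Set (ℚ → X) := Set.pi Set.univ (fun q : ℚ => Metric.closedBall x (|(q : ℝ)| + 1)) with hK
  have hKc : IsCompact K := isCompact_univ_pi fun q => isCompact_closedBall x _
  have hmem : ∀ n, (fun q : ℚ => g n (q : ℝ)) ∈ K := by
    intro n
    refine Set.mem_univ_pi.mpr fun q => ?_
    rw [mem_closedBall, dist_comm, hgballd]
    refine max_le (by positivity) ((min_le_left _ _).trans ((le_abs_self _).trans (by linarith)))
  obtain ⟨f, hfK, φ, hφ, hconv⟩ := hKc.tendsto_subseq hmem
  have hconvq : ∀ q : ℚ, Filter.Tendsto (fun j => g (φ j) (q : ℝ)) Filter.atTop (nhds (f q)) :=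
    fun q => tendsto_pi_nhds.mp hconv q
  -- convergence at every real parameter
  have hcauchy : ∀ t : ℝ, ∃ y : X, Filter.Tendsto (fun j => g (φ j) t) Filter.atTop (nhds y) := by
    intro t
    apply cauchySeq_tendsto_of_complete
    rw [Metric.cauchySeq_iff]
    intro ε hε
    obtain ⟨q, hq⟩ := exists_rat_near t (by linarith : (0 : ℝ) < ε / 4)
    have hc : CauchySeq fun j => g (φ j) (q : ℝ) := (hconvq q).cauchySeq
    rw [Metric.cauchySeq_iff] at hc
    obtain ⟨N, hN⟩ := hc (ε / 4) (by linarith)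
    refine ⟨N, fun m hm n hn => ?_⟩
    have h1 := hgdist (φ m) t (q : ℝ)
    have h2 := hgdist (φ n) (q : ℝ) t
    have h3 := hN m hm n hn
    have habs : |(q : ℝ) - t| = |t - (q : ℝ)| := abs_sub_comm _ _
    calc dist (g (φ m) t) (g (φ n) t) ≤
        dist (g (φ m) t) (g (φ m) (q : ℝ)) + dist (g (φ m) (q : ℝ)) (g (φ n) (q : ℝ)) +
          dist (g (φ n) (q : ℝ)) (g (φ n) t) := dist_triangle4 _ _ _ _
    _ < ε := by rw [dist_comm (g (φ n) (q : ℝ)) (g (φ n) t)] at h2 ⊢; linarith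
  choose ρ hρ using hcauchy
  -- lengths along the subsequence tend to infinity
  have hLtend : ∀ r : ℝ, ∃ N : ℕ, ∀ j, N ≤ j → r < L (φ j) := by
    intro r
    obtain ⟨N, hN⟩ := hD r
    refine ⟨N, fun j hj => ?_⟩
    have h1 : r < infDist x (A (φ j)) := hN (φ j) (le_trans hj (hφ.le_apply))
    exact lt_of_lt_of_le h1 (infDist_le_dist_of_mem (hp1 (φ j)))
  -- the limit is a geodesic ray
  have hray : GeodesicRay ρ := by
    intro s t hs ht
    have h1 : Filter.Tendsto (fun j => dist (g (φ j) s) (g (φ j) t)) Filter.atTop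
        (nhds (dist (ρ s) (ρ t))) := (hρ s).dist (hρ t)
    obtain ⟨N, hN⟩ := hLtend (max s t)
    have h2 : ∀ j, N ≤ j → dist (g (φ j) s) (g (φ j) t) = |s - t| := by
      intro j hj
      have hL' := hN j hj
      have hs' : s ∈ Set.Icc 0 (L (φ j)) := ⟨hs, (le_max_left s t).trans hL'.le⟩
      have ht' : t ∈ Set.Icc 0 (L (φ j)) := ⟨ht, (le_max_right s t).trans hL'.le⟩
      rw [hgeq (φ j) s hs', hgeq (φ j) t ht']
      exact (hγ (φ j)).2.1 s hs' t ht'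
    have h3 : Filter.Tendsto (fun j => dist (g (φ j) s) (g (φ j) t)) Filter.atTop
        (nhds (|s - t|)) := by
      refine Filter.Tendsto.congr' ?_ tendsto_const_nhds
      exact Filter.eventually_atTop.mpr ⟨N, fun j hj => (h2 j hj).symm⟩
    exact tendsto_nhds_unique h1 h3
  have hρ0 : ρ 0 = x := by
    refine tendsto_nhds_unique (hρ 0) ?_
    have : (fun j => g (φ j) 0) = fun _ => x := funext fun j => hg0 (φ j)
    rw [this]
    exact tendsto_const_nhds
  have hρdist : ∀ s : ℝ, 0 ≤ s → dist x (ρ s) = s := by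
    intro s hs
    have h := hray 0 s le_rfl hs
    rw [hρ0] at h
    rw [h, abs_of_nonpos (by linarith)]
    ring
  refine ⟨φ, hφ, ρ, hray, ?_⟩
  intro R hR
  set s₂ : ℝ := R + k + 20 * δ + 20 with hs₂def
  have hs₂0 : 0 ≤ s₂ := by linarith
  obtain ⟨N₁, hN₁⟩ := hD (s₂ + k + 2 * δ)
  have hconv₂ := hρ s₂
  rw [Metric.tendsto_atTop] at hconv₂
  obtain ⟨N₂, hN₂⟩ := hconv₂ 1 one_pos
  obtain ⟨N₃, hN₃⟩ := hLtend s₂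
  refine ⟨max N₁ (max N₂ N₃), fun j hj q hq α hα hα0 hhd t ht => ?_⟩
  have hq' : q ∈ A (φ j) := hq
  have hjN₁ : N₁ ≤ φ j := le_trans (le_trans (le_max_left _ _) hj) hφ.le_apply
  have hDn : s₂ + k + 2 * δ < infDist x (A (φ j)) := hN₁ (φ j) hjN₁
  have hgp1 : s₂ ≤ gp x q (p (φ j)) := by
    have := infDist_le_gp hδ hgeo hhyp (hA (φ j)) hq' (hp1 (φ j)) x
    linarith
  have hLn : s₂ < L (φ j) := hN₃ j (le_trans ((le_max_right _ _).trans (le_max_right _ _)) hj)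
  have hg2 : dist (g (φ j) s₂) (ρ s₂) < 1 :=
    hN₂ j (le_trans ((le_max_left _ _).trans (le_max_right _ _)) hj)
  have hs₂mem : s₂ ∈ Set.Icc 0 (L (φ j)) := ⟨hs₂0, hLn.le⟩
  have hdp : dist (p (φ j)) (g (φ j) s₂) = L (φ j) - s₂ := by
    rw [hgeq (φ j) s₂ hs₂mem, ← (hγ (φ j)).2.2.2,
      (hγ (φ j)).2.1 (L (φ j)) ⟨hL0 (φ j), le_refl _⟩ s₂ hs₂mem,
      abs_of_nonneg (by linarith)]
  have hdpρ : dist (p (φ j)) (ρ s₂) ≤ (L (φ j) - s₂) + 1 := by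
    calc dist (p (φ j)) (ρ s₂) ≤ dist (p (φ j)) (g (φ j) s₂) + dist (g (φ j) s₂) (ρ s₂) :=
          dist_triangle _ _ _
    _ ≤ (L (φ j) - s₂) + 1 := by rw [hdp]; linarith
  have hgp2 : s₂ - 1 ≤ gp x (p (φ j)) (ρ s₂) := by
    have h1 : dist x (ρ s₂) = s₂ := hρdist s₂ hs₂0
    have h2 : dist x (p (φ j)) = L (φ j) := rfl
    unfold gp
    rw [h1, h2]
    linarith
  have hgpB : s₂ - 1 - 3 * δ ≤ gp x q (ρ s₂) := by
    have h := gp_min_le hδ hgeo hhyp x q (p (φ j)) (ρ s₂)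
    have hm : s₂ - 1 ≤ min (gp x q (p (φ j))) (gp x (p (φ j)) (ρ s₂)) :=
      le_min (by linarith) hgp2
    linarith
  obtain ⟨C, hC1, hC2⟩ := hhd
  have hC0 : 0 ≤ C := by
    obtain ⟨t0, _, hd0⟩ := hC1 0 le_rfl
    exact le_trans dist_nonneg hd0
  set s : ℝ := max s₂ (max (C + s₂) (t + C + dist x q + 1)) with hsdef
  have hss₂ : s₂ ≤ s := le_max_left _ _
  have hs0 : 0 ≤ s := le_trans hs₂0 hss₂
  have hgpρρ : gp x (ρ s₂) (ρ s) = s₂ := by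
    unfold gp
    rw [hρdist s₂ hs₂0, hρdist s hs0]
    have h : dist (ρ s₂) (ρ s) = s - s₂ := by
      rw [hray s₂ s hs₂0 hs0, abs_of_nonpos (by linarith)]; ring
    rw [h]; ring
  have hgpA : s₂ - 1 - 6 * δ ≤ gp x q (ρ s) := by
    have h := gp_min_le hδ hgeo hhyp x q (ρ s₂) (ρ s)
    have hm : s₂ - 1 - 3 * δ ≤ min (gp x q (ρ s₂)) (gp x (ρ s₂) (ρ s)) :=
      le_min hgpB (by rw [hgpρρ]; linarith)
    linarith
  obtain ⟨T, hT0, hTd⟩ := hC2 s hs0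
  have hq0 : dist q (α T) = T := by
    rw [← hα0, hα 0 T le_rfl hT0, abs_of_nonpos (by linarith)]
    ring
  have hxαT : s - C ≤ dist x (α T) := by
    have h1 : dist x (ρ s) ≤ dist x (α T) + dist (α T) (ρ s) := dist_triangle _ _ _
    rw [hρdist s hs0] at h1
    linarith
  have hTt : t ≤ T := by
    have h1 : dist x (α T) ≤ dist x q + dist q (α T) := dist_triangle _ _ _
    have h2 : t + C + dist x q + 1 ≤ s :=
      le_trans (le_max_right (C + s₂) _) (le_max_right s₂ _)
    rw [hq0] at h1
    linarith
  have hgpρα : s₂ ≤ gp x (ρ s) (α T) := by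
    have hcs : C + s₂ ≤ s := le_trans (le_max_left _ _) (le_max_right _ _)
    have hc : dist (ρ s) (α T) = dist (α T) (ρ s) := dist_comm _ _
    unfold gp
    rw [hρdist s hs0]
    linarith
  have hgpF : s₂ - 1 - 9 * δ ≤ gp x q (α T) := by
    have h := gp_min_le hδ hgeo hhyp x q (ρ s) (α T)
    have hm : s₂ - 1 - 6 * δ ≤ min (gp x q (ρ s)) (gp x (ρ s) (α T)) :=
      le_min hgpA (by linarith)
    linarith
  have hfinal : gp x q (α T) ≤ dist x (α t) := by
    have e1 : dist q (α t) = t := by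
      rw [← hα0, hα 0 t le_rfl ht, abs_of_nonpos (by linarith)]; ring
    have e2 : dist (α t) (α T) = T - t := by
      rw [hα t T ht hT0, abs_of_nonpos (by linarith)]; ring
    have t1 : dist x q ≤ dist x (α t) + dist (α t) q := dist_triangle _ _ _
    have t2 : dist x (α T) ≤ dist x (α t) + dist (α t) (α T) := dist_triangle _ _ _
    have c1 : dist (α t) q = dist q (α t) := dist_comm _ _
    unfold gp
    rw [hq0]
    linarith
  linarith
end
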